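/- arXiv:2404.03475 — 12 statements merged into one kernel-verified Lean document; each statement's English description precedes it below -/
import Mathlib

section
/- Let M be a finite right semicentral monoid and let e, f be idempotents of M. Then Me ∩ Mf = M(ef), where for x ∈ M, Mx denotes the principal left ideal {mx | m ∈ M}. -/
/-- Let `M` be a finite right semicentral monoid and `e, f` idempotents of
`M`.  Then `Me ∩ Mf = M(ef)`, where `Mx = {m * x | m ∈ M}` is the principal left ideal
generated by `x`. -/
theorem stmt_1 (M : Type*) [Monoid M] [Fintype M]
    (hsc : ∀ e m : M, IsIdempotentElem e → e * m * e = e * m)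
    (e f : M) (he : IsIdempotentElem e) (hf : IsIdempotentElem f) :
    {x : M | ∃ m : M, m * e = x} ∩ {x : M | ∃ m : M, m * f = x} =
      {x : M | ∃ m : M, m * (e * f) = x} := by
  ext x
  constructor
  · rintro ⟨⟨a, ha⟩, ⟨b, hb⟩⟩
    refine ⟨x, ?_⟩
    have hxe : x * e = x := by rw [← ha, mul_assoc, he]
    have hxf : x * f = x := by rw [← hb, mul_assoc, hf]
    rw [← mul_assoc, hxe, hxf]
  · rintro ⟨m, hm⟩
    refine ⟨⟨m * e * f, ?_⟩, ⟨m * e, ?_⟩⟩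
    · rw [← hm]
      have := hsc e f he
      rw [mul_assoc, mul_assoc, ← mul_assoc e f e, this, ← mul_assoc]
    · rw [← hm, mul_assoc]
end

section
/- Let M be a finite right semicentral monoid, e an idempotent of M, m ∈ M, and n ≥ 1 such that m^n is idempotent. Then the following are equivalent: (i) e ∈ MmM; (ii) Me ⊆ Mm; (iii) Me ⊆ M(m^n). -/
/-- In a finite monoid, a one-sided inverse relative to a "local identity" `e` flips. -/
private lemma flip_inv {M : Type*} [Monoid M] [Fintype M] (e a b : M)
    (hee : e * e = e)
    (hea : e * a = a) (hae : a * e = a) (heb : e * b = b) (hbe : b * e = b)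
    (hab : a * b = e) : b * a = e := by
  let S := {t : M // e * t = t ∧ t * e = t}
  let F : S → S := fun t => ⟨t.1 * a, by rw [← mul_assoc, t.2.1], by rw [mul_assoc, hae]⟩
  have hinj : Function.Injective F := by
    intro t s h
    have h' : t.1 * a = s.1 * a := congrArg Subtype.val h
    have : t.1 * a * b = s.1 * a * b := by rw [h']
    rw [mul_assoc, hab, t.2.2, mul_assoc, hab, s.2.2] at this
    exact Subtype.ext this
  have hsurj : Function.Surjective F := Finite.surjective_of_injective hinj
  obtain ⟨c, hc⟩ := hsurj ⟨e, hee, hee⟩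
  have hc' : c.1 * a = e := congrArg Subtype.val hc
  have hcb : c.1 = b :=
    calc c.1 = c.1 * e := c.2.2.symm
      _ = c.1 * (a * b) := by rw [hab]
      _ = (c.1 * a) * b := by rw [mul_assoc]
      _ = e * b := by rw [hc']
      _ = b := heb
  rw [← hcb]; exact hc'

/-- Let `M` be a finite right semicentral monoid, `e` an idempotent, `m ∈ M`
and `n ≥ 1` with `m ^ n` idempotent.  Then the following are equivalent:
(i) `e ∈ M m M`; (ii) `M e ⊆ M m`; (iii) `M e ⊆ M (m ^ n)`. -/
theorem stmt_2 (M : Type*) [Monoid M] [Fintype M]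
    (hsc : ∀ e m : M, IsIdempotentElem e → e * m * e = e * m)
    (e m : M) (he : IsIdempotentElem e)
    (n : ℕ) (hn : 1 ≤ n) (hmn : IsIdempotentElem (m ^ n)) :
    ((∃ a b : M, a * m * b = e) ↔
        {x : M | ∃ a : M, a * e = x} ⊆ {x : M | ∃ a : M, a * m = x}) ∧
      ((∃ a b : M, a * m * b = e) ↔
        {x : M | ∃ a : M, a * e = x} ⊆ {x : M | ∃ a : M, a * m ^ n = x}) := by
  have hee : e * e = e := he
  -- left multiplication by `e` is multiplicative
  have lem : ∀ s t : M, (e * s) * (e * t) = e * (s * t) := by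
    intro s t
    calc (e * s) * (e * t) = (e * s * e) * t := by rw [mul_assoc (e*s) e t]
    _ = (e * s) * t := by rw [hsc e s he]
    _ = e * (s * t) := by rw [mul_assoc]
  -- Key step: (i) implies e * m ^ n = e
  have key : (∃ a b : M, a * m * b = e) → e * m ^ n = e := by
    rintro ⟨a, b, hab⟩
    have hxe : (e*a) * e = e*a := hsc e a he
    have hye : (e*m) * e = e*m := hsc e m he
    have hze : (e*b) * e = e*b := hsc e b he
    have hex : e * (e*a) = e*a := by rw [← mul_assoc, hee]
    have hey : e * (e*m) = e*m := by rw [← mul_assoc, hee]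
    have hez : e * (e*b) = e*b := by rw [← mul_assoc, hee]
    have hxyz : (e*a) * (e*m) * (e*b) = e := by
      rw [lem a m, lem (a*m) b, hab, hee]
    have hu1 : e * ((e*a) * (e*m)) = (e*a)*(e*m) := by rw [← mul_assoc, hex]
    have hu2 : ((e*a)*(e*m)) * e = (e*a)*(e*m) := by rw [mul_assoc, hye]
    have hzxy : (e*b) * ((e*a)*(e*m)) = e :=
      flip_inv e ((e*a)*(e*m)) (e*b) hee hu1 hu2 hez hze hxyz
    have hwy : ((e*b)*(e*a)) * (e*m) = e := by rw [mul_assoc]; exact hzxy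
    have hew : e * ((e*b)*(e*a)) = (e*b)*(e*a) := by rw [← mul_assoc, hez]
    have hwe : ((e*b)*(e*a)) * e = (e*b)*(e*a) := by rw [mul_assoc, hxe]
    have hyw : (e*m) * ((e*b)*(e*a)) = e :=
      flip_inv e ((e*b)*(e*a)) (e*m) hee hew hwe hey hye hwy
    set w := (e*b)*(e*a) with hwdef
    -- e * m^k * w^k = e for all k
    have hyk : ∀ k : ℕ, e * m ^ k * w ^ k = e := by
      intro k
      induction k with
      | zero => simp [hee]
      | succ k ih =>
        calc e * m ^ (k+1) * w ^ (k+1)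
            = (e*m)*(e*m^k) * (w^k * w) := by
              rw [pow_succ' m k, pow_succ w k, lem m (m^k)]
          _ = (e*m)*((e * m^k * w^k)*w) := by simp only [mul_assoc]
          _ = (e*m)*(e*w) := by rw [ih]
          _ = (e*m)*w := by rw [hew]
          _ = e := hyw
    -- e * m^n is idempotent
    have hidem : (e * m ^ n) * (e * m ^ n) = e * m ^ n := by
      rw [lem (m ^ n) (m ^ n), hmn]
    calc e * m ^ n = (e * m ^ n) * e := (hsc e (m ^ n) he).symm
      _ = (e * m ^ n) * (e * m ^ n * w ^ n) := by rw [hyk n]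
      _ = ((e * m ^ n) * (e * m ^ n)) * w ^ n := by simp only [mul_assoc]
      _ = (e * m ^ n) * w ^ n := by rw [hidem]
      _ = e := hyk n
  obtain ⟨k, rfl⟩ : ∃ k, n = k + 1 := ⟨n - 1, (Nat.succ_pred_eq_of_pos hn).symm⟩
  constructor
  · constructor
    · intro hi c hc
      obtain ⟨d, hd⟩ := hc
      refine ⟨d * e * m ^ k, ?_⟩
      rw [mul_assoc, ← pow_succ, mul_assoc, key hi, hd]
    · intro h
      obtain ⟨d, hd⟩ := h ⟨1, rfl⟩
      exact ⟨d, e, by rw [hd, one_mul, hee]⟩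
  · constructor
    · intro hi c hc
      obtain ⟨d, hd⟩ := hc
      refine ⟨d * e, ?_⟩
      rw [mul_assoc, key hi, hd]
    · intro h
      obtain ⟨d, hd⟩ := h ⟨1, rfl⟩
      exact ⟨d * m ^ k, 1, by rw [mul_one, mul_assoc, ← pow_succ, hd, one_mul]⟩
end

section
/- Let M be a finite right semicentral monoid, let m, n ∈ M, and let a, b, c ≥ 1 be such that m^a, n^b and (mn)^c are idempotent. Then M((mn)^c) = M(m^a) ∩ M(n^b). In particular, the map sending each element to the principal left ideal generated by its idempotent power is a monoid homomorphism from M onto the meet-semilattice (under intersection) of idempotent-generated principal left ideals of M. -/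
private lemma iter_right {M : Type*} [Monoid M] (F : ℕ → M) (z : M)
    (h : ∀ k, F (k + 1) * z = F k) : ∀ j k, F (k + j) * z ^ j = F k := by
  intro j
  induction j with
  | zero => intro k; simp
  | succ j ih =>
      intro k
      have hk : k + (j + 1) = (k + 1) + j := by omega
      rw [hk, pow_succ, ← mul_assoc, ih (k + 1), h k]

private lemma iter_left {M : Type*} [Monoid M] (F : ℕ → M) (u : M)
    (h : ∀ k, u * F (k + 1) = F k) : ∀ j k, u ^ j * F (k + j) = F k := by
  intro j
  induction j with
  | zero => intro k; simp
  | succ j ih =>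
      intro k
      have hk : k + (j + 1) = (k + 1) + j := by omega
      rw [hk, pow_succ', mul_assoc, ih (k + 1), h k]

private lemma key_cancel {M : Type*} [Monoid M] (g w z : M) (d : ℕ)
    (hstep : ∀ k, (g * w ^ (k + 1)) * z = g * w ^ k)
    (hidem : w ^ (d + d) = w ^ d) : g * w ^ d = g := by
  have h1 := iter_right (fun k => g * w ^ k) z hstep d 0
  have h2 := iter_right (fun k => g * w ^ k) z hstep d d
  simp only [Nat.zero_add, pow_zero, mul_one] at h1
  simp only [hidem] at h2
  rw [← h2]; exact h1

private lemma key_cancel_left {M : Type*} [Monoid M] (g w u : M) (d : ℕ)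
    (hstep : ∀ k, u * (g * w ^ (k + 1)) = g * w ^ k)
    (hidem : w ^ (d + d) = w ^ d) : g * w ^ d = g := by
  have h1 := iter_left (fun k => g * w ^ k) u hstep d 0
  have h2 := iter_left (fun k => g * w ^ k) u hstep d d
  simp only [Nat.zero_add, pow_zero, mul_one] at h1
  simp only [hidem] at h2
  rw [← h2]; exact h1

/-- Let `M` be a finite right semicentral monoid, `m, n ∈ M` and
`a, b, c ≥ 1` with `m ^ a`, `n ^ b` and `(m * n) ^ c` idempotent.  Then
`M((mn)^c) = M(m^a) ∩ M(n^b)`.  In particular, the map sending each element to the principal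
left ideal generated by its idempotent power is a monoid homomorphism from `M` onto the
meet-semilattice (under intersection) of idempotent-generated principal left ideals
(every idempotent-generated principal left ideal arises this way). -/
theorem stmt_3 (M : Type*) [Monoid M] [Fintype M]
    (hsc : ∀ e m : M, IsIdempotentElem e → e * m * e = e * m)
    (m n : M) (a b c : ℕ) (ha : 1 ≤ a) (hb : 1 ≤ b) (hc : 1 ≤ c)
    (hma : IsIdempotentElem (m ^ a)) (hnb : IsIdempotentElem (n ^ b))
    (hmnc : IsIdempotentElem ((m * n) ^ c)) :
    ({x : M | ∃ y : M, y * (m * n) ^ c = x} =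
        {x : M | ∃ y : M, y * m ^ a = x} ∩ {x : M | ∃ y : M, y * n ^ b = x}) ∧
      ∀ e : M, IsIdempotentElem e → ∃ (z : M) (k : ℕ), 1 ≤ k ∧ IsIdempotentElem (z ^ k) ∧
        {x : M | ∃ y : M, y * z ^ k = x} = {x : M | ∃ y : M, y * e = x} := by
  obtain ⟨a', rfl⟩ : ∃ a', a = a' + 1 := ⟨a - 1, by omega⟩
  obtain ⟨b', rfl⟩ : ∃ b', b = b' + 1 := ⟨b - 1, by omega⟩
  obtain ⟨c', rfl⟩ : ∃ c', c = c' + 1 := ⟨c - 1, by omega⟩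
  -- doubled powers collapse
  have hmm2 : m ^ ((a' + 1) + (a' + 1)) = m ^ (a' + 1) := by rw [pow_add, hma.eq]
  have hnn2 : n ^ ((b' + 1) + (b' + 1)) = n ^ (b' + 1) := by rw [pow_add, hnb.eq]
  have hmn2 : (m * n) ^ ((c' + 1) + (c' + 1)) = (m * n) ^ (c' + 1) := by rw [pow_add, hmnc.eq]
  -- Step A : g * e = g
  have hge : (m * n) ^ (c' + 1) * m ^ (a' + 1) = (m * n) ^ (c' + 1) := by
    apply key_cancel _ _ (n * (m * n) ^ c') _ _ hmm2
    intro k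
    have t1 : (m * n) ^ (c' + 1) * m ^ (k + 1) * (n * (m * n) ^ c') =
        (m * n) ^ (c' + 1) * m ^ k * (m * n) ^ (c' + 1) := by
      rw [pow_succ m k]
      nth_rewrite 3 [pow_succ' (m * n) c']
      simp only [mul_assoc]
    rw [t1, hsc _ _ hmnc]
  -- Step B : g * f = g
  have hgf : (m * n) ^ (c' + 1) * n ^ (b' + 1) = (m * n) ^ (c' + 1) := by
    apply key_cancel_left _ _ ((m * n) ^ (c' + 1) * ((m * n) ^ c' * m)) _ _ hnn2
    intro k
    have key : (m * n) ^ (c' + 1) * ((m * n) ^ c' * m) * (m * n) ^ (c' + 1) =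
        (m * n) ^ (c' + 1) * ((m * n) ^ c' * m) := hsc _ _ hmnc
    calc (m * n) ^ (c' + 1) * ((m * n) ^ c' * m) * ((m * n) ^ (c' + 1) * n ^ (k + 1))
        = ((m * n) ^ (c' + 1) * ((m * n) ^ c' * m) * (m * n) ^ (c' + 1)) * n ^ (k + 1) := by
          rw [mul_assoc ((m * n) ^ (c' + 1) * ((m * n) ^ c' * m))]
      _ = ((m * n) ^ (c' + 1) * ((m * n) ^ c' * m)) * n ^ (k + 1) := by rw [key]
      _ = (m * n) ^ (c' + 1) * ((m * n) ^ (c' + 1) * n ^ k) := by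
          nth_rewrite 3 [pow_succ (m * n) c']
          rw [pow_succ' n k]
          simp only [mul_assoc]
      _ = ((m * n) ^ (c' + 1) * (m * n) ^ (c' + 1)) * n ^ k := by rw [mul_assoc]
      _ = (m * n) ^ (c' + 1) * n ^ k := by rw [hmnc.eq]
  -- h = e * f is idempotent
  have hhidem : IsIdempotentElem (m ^ (a' + 1) * n ^ (b' + 1)) := by
    show _ * _ = _
    calc (m ^ (a' + 1) * n ^ (b' + 1)) * (m ^ (a' + 1) * n ^ (b' + 1))
        = m ^ (a' + 1) * (n ^ (b' + 1) * m ^ (a' + 1) * n ^ (b' + 1)) := by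
          simp only [mul_assoc]
      _ = m ^ (a' + 1) * (n ^ (b' + 1) * m ^ (a' + 1)) := by rw [hsc _ _ hnb]
      _ = m ^ (a' + 1) * n ^ (b' + 1) * m ^ (a' + 1) := by rw [mul_assoc]
      _ = m ^ (a' + 1) * n ^ (b' + 1) := hsc _ _ hma
  have hhe : (m ^ (a' + 1) * n ^ (b' + 1)) * m ^ (a' + 1) = m ^ (a' + 1) * n ^ (b' + 1) :=
    hsc _ _ hma
  have hhf : (m ^ (a' + 1) * n ^ (b' + 1)) * n ^ (b' + 1) = m ^ (a' + 1) * n ^ (b' + 1) := by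
    rw [mul_assoc, hnb.eq]
  have hhuh : ∀ u : M, (m ^ (a' + 1) * n ^ (b' + 1)) * u * (m ^ (a' + 1) * n ^ (b' + 1)) =
      (m ^ (a' + 1) * n ^ (b' + 1)) * u := fun u => hsc _ u hhidem
  have habsf : ∀ X : M, (m ^ (a' + 1) * n ^ (b' + 1)) * X * n ^ (b' + 1) =
      (m ^ (a' + 1) * n ^ (b' + 1)) * X := by
    intro X
    calc (m ^ (a' + 1) * n ^ (b' + 1)) * X * n ^ (b' + 1)
        = ((m ^ (a' + 1) * n ^ (b' + 1)) * X * (m ^ (a' + 1) * n ^ (b' + 1))) * n ^ (b' + 1) := by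
          rw [hhuh]
      _ = (m ^ (a' + 1) * n ^ (b' + 1)) * X *
            ((m ^ (a' + 1) * n ^ (b' + 1)) * n ^ (b' + 1)) := by
          rw [mul_assoc ((m ^ (a' + 1) * n ^ (b' + 1)) * X)]
      _ = (m ^ (a' + 1) * n ^ (b' + 1)) * X * (m ^ (a' + 1) * n ^ (b' + 1)) := by rw [hhf]
      _ = (m ^ (a' + 1) * n ^ (b' + 1)) * X := hhuh X
  have habse : ∀ X : M, (m ^ (a' + 1) * n ^ (b' + 1)) * X * m ^ (a' + 1) =
      (m ^ (a' + 1) * n ^ (b' + 1)) * X := by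
    intro X
    calc (m ^ (a' + 1) * n ^ (b' + 1)) * X * m ^ (a' + 1)
        = ((m ^ (a' + 1) * n ^ (b' + 1)) * X * (m ^ (a' + 1) * n ^ (b' + 1))) * m ^ (a' + 1) := by
          rw [hhuh]
      _ = (m ^ (a' + 1) * n ^ (b' + 1)) * X *
            ((m ^ (a' + 1) * n ^ (b' + 1)) * m ^ (a' + 1)) := by
          rw [mul_assoc ((m ^ (a' + 1) * n ^ (b' + 1)) * X)]
      _ = (m ^ (a' + 1) * n ^ (b' + 1)) * X * (m ^ (a' + 1) * n ^ (b' + 1)) := by rw [hhe]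
      _ = (m ^ (a' + 1) * n ^ (b' + 1)) * X := hhuh X
  -- Step C : (e * f) * g = e * f
  have hefg : (m ^ (a' + 1) * n ^ (b' + 1)) * (m * n) ^ (c' + 1) =
      m ^ (a' + 1) * n ^ (b' + 1) := by
    apply key_cancel _ _ (n ^ b' * m ^ a') _ _ hmn2
    intro k
    have step1 : ((m ^ (a' + 1) * n ^ (b' + 1)) * (m * n) ^ (k + 1)) * (n ^ b' * m ^ a') =
        ((m ^ (a' + 1) * n ^ (b' + 1)) * ((m * n) ^ k * m) * n ^ (b' + 1)) * m ^ a' := by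
      rw [pow_succ (m * n) k]
      nth_rewrite 3 [pow_succ' n b']
      simp only [mul_assoc]
    rw [step1, habsf ((m * n) ^ k * m)]
    have step2 : ((m ^ (a' + 1) * n ^ (b' + 1)) * ((m * n) ^ k * m)) * m ^ a' =
        (m ^ (a' + 1) * n ^ (b' + 1)) * (m * n) ^ k * m ^ (a' + 1) := by
      nth_rewrite 3 [pow_succ' m a']
      simp only [mul_assoc]
    rw [step2, habse ((m * n) ^ k)]
  refine ⟨?_, ?_⟩
  · ext x
    simp only [Set.mem_setOf_eq, Set.mem_inter_iff]
    constructor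
    · rintro ⟨y, rfl⟩
      exact ⟨⟨y * (m * n) ^ (c' + 1), by rw [mul_assoc, hge]⟩,
        ⟨y * (m * n) ^ (c' + 1), by rw [mul_assoc, hgf]⟩⟩
    · rintro ⟨⟨y1, hy1⟩, ⟨y2, hy2⟩⟩
      have hxe : x * m ^ (a' + 1) = x := by rw [← hy1, mul_assoc, hma.eq]
      have hxf : x * n ^ (b' + 1) = x := by rw [← hy2, mul_assoc, hnb.eq]
      have hxef : x * (m ^ (a' + 1) * n ^ (b' + 1)) = x := by rw [← mul_assoc, hxe, hxf]
      refine ⟨x, ?_⟩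
      calc x * (m * n) ^ (c' + 1)
          = x * ((m ^ (a' + 1) * n ^ (b' + 1)) * (m * n) ^ (c' + 1)) := by
            rw [← mul_assoc, hxef]
        _ = x * (m ^ (a' + 1) * n ^ (b' + 1)) := by rw [hefg]
        _ = x := hxef
  · intro e' he'
    exact ⟨e', 1, le_refl 1, by simpa using he', by simp⟩
end

section
/- Let M be a finite right semicentral monoid and let e be an idempotent of M lying in the minimal ideal, i.e. e ∈ MmM for every m ∈ M. Then: (i) eMe = eM is a group with identity element e, that is, for every x ∈ eMe there exists y ∈ eMe with xy = yx = e; (ii) the map ρ_e : M → eMe given by ρ_e(m) = em (= eme) is a surjective monoid homomorphism; (iii) ρ_e is the group completion of M: for every group H and every monoid homomorphism f : M → H there is a unique monoid homomorphism g : eMe → H with g ∘ ρ_e = f. -/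
/-- In a finite monoid, some positive power of every element is idempotent. -/
lemma aux_exists_idem_pow {M : Type*} [Monoid M] [Fintype M] (a : M) :
    ∃ k : ℕ, 0 < k ∧ a ^ k * a ^ k = a ^ k := by
  obtain ⟨i, j, hne, hij⟩ := Finite.exists_ne_map_eq_of_infinite (fun n : ℕ => a ^ n)
  wlog hlt : i < j generalizing i j
  · exact this j i hne.symm hij.symm (by omega)
  set d := j - i with hd
  have hd0 : 0 < d := by omega
  have hstep : ∀ m : ℕ, i ≤ m → a ^ (m + d) = a ^ m := by
    intro m hm
    have : m + d = (m - i) + j := by omega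
    rw [this, pow_add, ← hij, ← pow_add]
    congr 1
    omega
  have hgen : ∀ c m : ℕ, i ≤ m → a ^ (m + c * d) = a ^ m := by
    intro c
    induction c with
    | zero => simp
    | succ n ih =>
      intro m hm
      have : m + (n + 1) * d = (m + n * d) + d := by ring
      rw [this, hstep (m + n * d) (by omega), ih m hm]
  refine ⟨(i + 1) * d, by positivity, ?_⟩
  rw [← pow_add]
  exact hgen (i + 1) ((i + 1) * d) (by nlinarith)

/-- In a finite monoid, a one-sided inverse (relative to an idempotent acting as identity)
is two-sided. -/
lemma aux_inv {M : Type*} [Monoid M] [Fintype M] (e a b : M)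
    (hea : e * a = a) (hae : a * e = a) (heb : e * b = b) (hab : a * b = e) :
    b * a = e := by
  obtain ⟨k, hk, hidem⟩ := aux_exists_idem_pow a
  have hpow : ∀ j : ℕ, 0 < j → a ^ j * b ^ j = e := by
    intro j hj
    induction j with
    | zero => omega
    | succ n ih =>
      rcases Nat.eq_zero_or_pos n with hn | hn
      · subst hn; simpa using hab
      · rw [pow_succ', pow_succ, mul_assoc, ← mul_assoc (a ^ n), ih hn,
          ← mul_assoc, hae, hab]
  obtain ⟨n, rfl⟩ := Nat.exists_eq_succ_of_ne_zero hk.ne'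
  have hke : a ^ (n + 1) * e = a ^ (n + 1) := by
    rw [pow_succ, mul_assoc, hae]
  have hake : a ^ (n + 1) = e := by
    have h1 : a ^ (n + 1) * e = e := by
      rw [← hpow (n + 1) hk, ← mul_assoc, hidem, hpow (n + 1) hk]
    rw [← hke, h1]
  have hb : b = a ^ n * e := by
    calc b = e * b := heb.symm
      _ = a ^ (n + 1) * b := by rw [hake]
      _ = a ^ n * (a * b) := by rw [pow_succ, mul_assoc]
      _ = a ^ n * e := by rw [hab]
  rw [hb, mul_assoc, hea, ← pow_succ, hake]

/-- Let `M` be a finite right semicentral monoid and `e` an idempotent lying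
in the minimal ideal of `M` (i.e. `e ∈ M m M` for every `m`).  Then:
(i) `eMe = eM` and `eMe` is a group with identity `e`;
(ii) `ρ_e : M → eMe`, `ρ_e(m) = e * m`, is a surjective monoid homomorphism
(multiplicative, sends `1` to the identity `e` of `eMe`, and hits every element of `eMe`);
(iii) `ρ_e` is the group completion of `M`: for every group `H` and monoid homomorphism
`f : M →* H` there is a unique map `g` on `eMe = {x | e * x * e = x}` that is multiplicative
and satisfies `g ∘ ρ_e = f`. -/
theorem stmt_4 (M : Type*) [Monoid M] [Fintype M]
    (hsc : ∀ e m : M, IsIdempotentElem e → e * m * e = e * m)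
    (e : M) (he : IsIdempotentElem e)
    (hmin : ∀ m : M, ∃ a b : M, a * m * b = e) :
    ({x : M | ∃ m : M, x = e * m * e} = {x : M | ∃ m : M, x = e * m}) ∧
      (∀ x : M, (∃ m : M, x = e * m * e) →
        e * x = x ∧ x * e = x ∧
          ∃ y : M, (∃ m : M, y = e * m * e) ∧ x * y = e ∧ y * x = e) ∧
      (∀ m n : M, e * (m * n) = e * m * (e * n)) ∧
      (e * 1 = e) ∧
      (∀ x : M, (∃ m : M, x = e * m * e) → ∃ m : M, e * m = x) ∧
      (∀ (H : Type*) (_ : Group H) (f : M →* H),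
        ∃! g : {x : M // e * x * e = x} → H,
          (∀ x y z : {x : M // e * x * e = x}, (x : M) * (y : M) = (z : M) → g z = g x * g y) ∧
            ∀ (m : M) (x : {x : M // e * x * e = x}), (x : M) = e * m → g x = f m) := by
  have he' : e * e = e := he
  have hre : ∀ z : M, z * e * e = z * e := fun z => by rw [mul_assoc, he']
  refine ⟨?_, ?_, ?_, mul_one e, ?_, ?_⟩
  · ext x
    simp only [Set.mem_setOf_eq]
    constructor
    · rintro ⟨m, rfl⟩; exact ⟨m, hsc e m he⟩
    · rintro ⟨m, rfl⟩; exact ⟨m, (hsc e m he).symm⟩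
  · rintro x ⟨m, rfl⟩
    have hex : e * (e * m * e) = e * m * e := by simp only [← mul_assoc, he', hre]
    have hxe : (e * m * e) * e = e * m * e := by simp only [mul_assoc, he']
    obtain ⟨a, b, hab⟩ := hmin (e * m * e)
    set x := e * m * e with hx
    set u := e * a * e with hu
    set v := e * b * e with hv
    have key : u * (x * v) = e := by
      have h2 : e * (a * (e * m * e) * b) * e = e := by rw [hab, he', he']
      calc u * (x * v) = e * (a * (e * m * e) * b) * e := by
            simp only [hu, hx, hv, ← mul_assoc, he', hre]
        _ = e := h2
    have heu : e * u = u := by simp only [hu, ← mul_assoc, he', hre]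
    have hue : u * e = u := by simp only [hu, mul_assoc, he']
    have hes : e * (x * v) = x * v := by simp only [hx, hv, ← mul_assoc, he', hre]
    have hsu : (x * v) * u = e := aux_inv e u (x * v) heu hue hes key
    have hxvu : x * (v * u) = e := by rw [← mul_assoc]; exact hsu
    have hevu : e * (v * u) = v * u := by simp only [hv, hu, ← mul_assoc, he', hre]
    have hyx : (v * u) * x = e := aux_inv e x (v * u) hex hxe hevu hxvu
    refine ⟨hex, hxe, v * u, ⟨b * e * a, ?_⟩, hxvu, hyx⟩
    simp only [hv, hu, ← mul_assoc, he', hre]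
  · intro m n
    simp only [← mul_assoc, hsc e m he]
  · rintro x ⟨m, rfl⟩
    exact ⟨m * e, (mul_assoc e m e).symm⟩
  · intro H hH f
    have hfe : f e = 1 := by
      have h1 : f e * f e = f e * 1 := by rw [← map_mul, he', mul_one]
      exact mul_left_cancel h1
    refine ⟨fun x => f x.1, ⟨?_, ?_⟩, ?_⟩
    · intro x y z h
      show f (z : M) = f (x : M) * f (y : M)
      rw [← h, map_mul]
    · intro m x hx
      show f (x : M) = f m
      rw [hx, map_mul, hfe, one_mul]
    · rintro g ⟨hg1, hg2⟩
      funext x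
      have hx : (x : M) = e * ((x : M) * e) := by rw [← mul_assoc, x.2]
      rw [hg2 ((x : M) * e) x hx]
      simp only [map_mul, hfe, mul_one]
end

section
/- Let M be a finite regular left duo monoid, let m ∈ M, and let n ≥ 1 be such that m^n is idempotent. Then m·m^n = m^n·m = m, and there exists m' ∈ M with m·m' = m'·m = m^n and m'·m^n = m^n·m' = m'; that is, m lies in the group of units of the monoid m^n M m^n (with identity m^n). -/
/-- Let `M` be a finite regular left duo monoid, `m ∈ M` and `n ≥ 1` with
`m ^ n` idempotent.  Then `m * m ^ n = m ^ n * m = m` and there is `m'` with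
`m * m' = m' * m = m ^ n` and `m' * m ^ n = m ^ n * m' = m'`; that is, `m` lies in the group
of units of `m ^ n * M * m ^ n` (with identity `m ^ n`). -/
theorem stmt_6 (M : Type*) [Monoid M] [Fintype M]
    (hreg : ∀ a : M, ∃ x : M, a * x * a = a)
    (hld : ∀ m x : M, ∃ y : M, m * x = y * m)
    (m : M) (n : ℕ) (hn : 1 ≤ n) (hidem : IsIdempotentElem (m ^ n)) :
    m * m ^ n = m ∧ m ^ n * m = m ∧
      ∃ m' : M, m * m' = m ^ n ∧ m' * m = m ^ n ∧ m' * m ^ n = m' ∧ m ^ n * m' = m' := by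
  obtain ⟨x, hx⟩ := hreg m
  obtain ⟨y, hy⟩ := hld m x
  have hym : m = y * m ^ 2 := by
    rw [pow_two, ← mul_assoc, ← hy, hx]
  have key : ∀ k : ℕ, m = y ^ k * m ^ (k + 1) := by
    intro k
    induction k with
    | zero => simp
    | succ k ih =>
      calc m = y ^ k * m ^ (k + 1) := ih
        _ = y ^ k * ((y * m ^ 2) * m ^ k) := by
            rw [← hym, ← pow_succ' m k]
        _ = y ^ (k + 1) * m ^ (k + 2) := by
            rw [pow_succ y, show k + 2 = 2 + k from by omega, pow_add m 2 k]
            simp [mul_assoc]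
  -- main identity: m * m ^ n = m
  have hk : y ^ (n - 1) * m ^ n = m := by
    have := key (n - 1); rw [Nat.sub_add_cancel hn] at this; exact this.symm
  have h1 : m * m ^ n = m := by
    calc m * m ^ n = y ^ (n - 1) * m ^ n * m ^ n := by rw [hk]
      _ = y ^ (n - 1) * (m ^ n * m ^ n) := mul_assoc _ _ _
      _ = y ^ (n - 1) * m ^ n := by rw [hidem]
      _ = m := hk
  have h1' : m ^ (n + 1) = m := by rw [pow_succ', h1]
  have h2 : m ^ n * m = m := by rw [← pow_succ, h1']
  refine ⟨h1, h2, m ^ (2 * n - 1), ?_, ?_, ?_, ?_⟩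
  · -- m * m ^ (2n-1) = m ^ n
    rw [← pow_succ', show 2 * n - 1 + 1 = n + n by omega, pow_add, hidem]
  · rw [← pow_succ, show 2 * n - 1 + 1 = n + n by omega, pow_add, hidem]
  · rw [← pow_add, show 2 * n - 1 + n = (n - 1) + n + n by omega, pow_add, pow_add,
      mul_assoc, hidem, ← pow_add, show n - 1 + n = 2 * n - 1 by omega]
  · rw [← pow_add, show n + (2 * n - 1) = (n - 1) + n + n by omega, pow_add, pow_add,
      mul_assoc, hidem, ← pow_add, show n - 1 + n = 2 * n - 1 by omega]
end

section
/- Let M be a finite regular left duo monoid. Let m ∈ M, let w be an idempotent with mw = wm = m, and let m' ∈ M satisfy mm' = m'm = w. Then for all idempotents e, f of M: (i) m e m' is idempotent; (ii) m(ef)m' = (m e m')(m f m'); (iii) if fe = e then (m f m')(m e m') = m e m'. Moreover, if n ∈ M, v is an idempotent with nv = vn = n and n' ∈ M satisfies nn' = n'n = v, and u is an idempotent with (mn)u = u(mn) = mn and p ∈ M satisfies (mn)p = p(mn) = u, then (mn) e p = m(n e n')m' for every idempotent e. Thus (m, e) ↦ m e m' defines an action of M on its set of idempotents by endomorphisms preserving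 the natural partial order e ≤ f iff fe = e. -/
/-- Let `M` be a finite regular left duo monoid, `m ∈ M`, `w` an idempotent
with `m * w = w * m = m`, and `m'` with `m * m' = m' * m = w`.  Then for all idempotents
`e, f`: (i) `m * e * m'` is idempotent; (ii) `m * (e * f) * m' = (m * e * m') * (m * f * m')`;
(iii) if `f * e = e` then `(m * f * m') * (m * e * m') = m * e * m'`.  Moreover, with `n, v,
n', u, p` as indicated, `(m * n) * e * p = m * (n * e * n') * m'` for every idempotent `e`.
Thus `(m, e) ↦ m * e * m'` defines an action of `M` on its idempotents by endomorphisms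
preserving the natural partial order `e ≤ f ↔ f * e = e`. -/
theorem stmt_7 (M : Type*) [Monoid M] [Fintype M]
    (hreg : ∀ a : M, ∃ x : M, a * x * a = a)
    (hld : ∀ m x : M, ∃ y : M, m * x = y * m)
    (m w m' : M) (hw : IsIdempotentElem w) (hmw : m * w = m) (hwm : w * m = m)
    (hmm' : m * m' = w) (hm'm : m' * m = w) :
    (∀ e : M, IsIdempotentElem e → IsIdempotentElem (m * e * m')) ∧
      (∀ e f : M, IsIdempotentElem e → IsIdempotentElem f →
        m * (e * f) * m' = m * e * m' * (m * f * m')) ∧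
      (∀ e f : M, IsIdempotentElem e → IsIdempotentElem f → f * e = e →
        m * f * m' * (m * e * m') = m * e * m') ∧
      (∀ n v n' u p : M, IsIdempotentElem v → n * v = n → v * n = n →
        n * n' = v → n' * n = v →
        IsIdempotentElem u → m * n * u = m * n → u * (m * n) = m * n →
        m * n * p = u → p * (m * n) = u →
        ∀ e : M, IsIdempotentElem e → m * n * e * p = m * (n * e * n') * m') := by
  have key : ∀ E : M, IsIdempotentElem E → ∀ x, E * (x * E) = E * x := by
    intro E hE x
    obtain ⟨y, hy⟩ := hld E x
    calc E * (x * E) = (E * x) * E := by rw [mul_assoc]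
      _ = (y * E) * E := by rw [hy]
      _ = y * (E * E) := by rw [mul_assoc]
      _ = y * E := by rw [hE]
      _ = E * x := hy.symm
  have key2 : ∀ E : M, IsIdempotentElem E → ∀ x y, E * (x * (E * y)) = E * (x * y) := by
    intro E hE x y
    calc E * (x * (E * y)) = (E * (x * E)) * y := by simp only [mul_assoc]
      _ = (E * x) * y := by rw [key E hE x]
      _ = E * (x * y) := by rw [mul_assoc]
  have L2 : ∀ E X : M, IsIdempotentElem E → E * X = X → X * E = X := by
    intro E X hE h
    calc X * E = (E * X) * E := by rw [h]
      _ = E * (X * E) := by rw [mul_assoc]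
      _ = E * X := key E hE X
      _ = X := h
  have h1 : ∀ x : M, m' * (m * x) = w * x := fun x => by rw [← mul_assoc, hm'm]
  have hpad : ∀ z : M, m * z = m * (w * z) := fun z => by rw [← mul_assoc, hmw]
  refine ⟨?_, ?_, ?_, ?_⟩
  · intro e he
    show m * e * m' * (m * e * m') = m * e * m'
    calc m * e * m' * (m * e * m')
        = m * (e * (m' * (m * (e * m')))) := by simp only [mul_assoc]
      _ = m * (e * (w * (e * m'))) := by rw [h1]
      _ = m * (w * (e * (w * (e * m')))) := hpad _
      _ = m * (w * (e * (e * m'))) := by rw [key2 w hw]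
      _ = m * (w * ((e * e) * m')) := by rw [mul_assoc]
      _ = m * (w * (e * m')) := by rw [he]
      _ = m * (e * m') := (hpad _).symm
      _ = m * e * m' := by rw [mul_assoc]
  · intro e f he hf
    symm
    calc m * e * m' * (m * f * m')
        = m * (e * (m' * (m * (f * m')))) := by simp only [mul_assoc]
      _ = m * (e * (w * (f * m'))) := by rw [h1]
      _ = m * (w * (e * (w * (f * m')))) := hpad _
      _ = m * (w * (e * (f * m'))) := by rw [key2 w hw]
      _ = m * (e * (f * m')) := (hpad _).symm
      _ = m * (e * f) * m' := by simp only [mul_assoc]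
  · intro e f he hf hfe
    calc m * f * m' * (m * e * m')
        = m * (f * (m' * (m * (e * m')))) := by simp only [mul_assoc]
      _ = m * (f * (w * (e * m'))) := by rw [h1]
      _ = m * (w * (f * (w * (e * m')))) := hpad _
      _ = m * (w * (f * (e * m'))) := by rw [key2 w hw]
      _ = m * (f * (e * m')) := (hpad _).symm
      _ = m * ((f * e) * m') := by rw [mul_assoc]
      _ = m * (e * m') := by rw [hfe]
      _ = m * e * m' := by rw [mul_assoc]
  · intro n v n' u p hv hnv hvn hnn' hn'n hu hmnu humn hmnp hpmn e he
    have hv' : ∀ x : M, n * (n' * x) = v * x := fun x => by rw [← mul_assoc, hnn']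
    have ha : m * (n * (n' * (m' * (m * n)))) = m * n := by
      calc m * (n * (n' * (m' * (m * n))))
          = m * (n * (n' * (w * n))) := by rw [h1]
        _ = m * (v * (w * n)) := by rw [hv']
        _ = m * (w * (v * (w * n))) := hpad _
        _ = m * (w * (v * n)) := by rw [key2 w hw]
        _ = m * (w * n) := by rw [hvn]
        _ = m * n := (hpad _).symm
    have ha2 : ∀ z : M, m * (n * ((n' * (m' * (m * n))) * z)) = m * (n * z) := by
      intro z
      have h := congrArg (· * z) ha
      simpa only [mul_assoc] using h
    have hU : IsIdempotentElem (n' * (m' * (m * n))) := by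
      show (n' * (m' * (m * n))) * (n' * (m' * (m * n))) = n' * (m' * (m * n))
      calc (n' * (m' * (m * n))) * (n' * (m' * (m * n)))
          = n' * (m' * (m * (n * (n' * (m' * (m * n)))))) := by simp only [mul_assoc]
        _ = n' * (m' * (m * n)) := by
            have h := congrArg (fun x => n' * (m' * x)) ha
            simpa using h
    have hmnp' : m * (n * p) = u := by rw [← mul_assoc]; exact hmnp
    have hUp : (n' * (m' * (m * n))) * p = n' * (m' * u) := by
      calc (n' * (m' * (m * n))) * p
          = n' * (m' * (m * (n * p))) := by simp only [mul_assoc]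
        _ = n' * (m' * u) := by rw [hmnp']
    have humn' : u * (m * (n * (e * (n' * m')))) = m * (n * (e * (n' * m'))) := by
      have h := congrArg (· * (e * (n' * m'))) humn
      simpa only [mul_assoc] using h
    have hxu := L2 u (m * (n * (e * (n' * m')))) hu humn'
    show m * n * e * p = m * (n * e * n') * m'
    calc m * n * e * p
        = m * (n * (e * p)) := by simp only [mul_assoc]
      _ = m * (n * ((n' * (m' * (m * n))) * (e * p))) := (ha2 (e * p)).symm
      _ = m * (n * ((n' * (m' * (m * n))) * (e * ((n' * (m' * (m * n))) * p)))) := by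
          rw [key2 _ hU e p]
      _ = m * (n * (e * ((n' * (m' * (m * n))) * p))) := ha2 _
      _ = m * (n * (e * (n' * (m' * u)))) := by rw [hUp]
      _ = m * (n * (e * (n' * m'))) * u := by simp only [mul_assoc]
      _ = m * (n * (e * (n' * m'))) := hxu
      _ = m * (n * e * n') * m' := by simp only [mul_assoc]
end

section
/- Let M be a finite regular left duo monoid. The map e ↦ eM is a bijection from the set of idempotents of M onto the set {mM | m ∈ M} of principal right ideals of M, and for idempotents e, f one has eM ⊆ fM if and only if fe = e. Consequently, e ↦ eM is an order isomorphism from the set of idempotents of M with the partial order e ≤ f iff fe = e onto the set of principal right ideals of M ordered by inclusion. -/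
/-- Let `M` be a finite regular left duo monoid.  The map `e ↦ eM` is a
bijection from the idempotents of `M` onto the set of principal right ideals `mM`, and for
idempotents `e, f` one has `eM ⊆ fM ↔ f * e = e`.  Hence `e ↦ eM` is an order isomorphism
from the idempotents (ordered by `e ≤ f ↔ f * e = e`) onto the principal right ideals ordered
by inclusion. -/
theorem stmt_8 (M : Type*) [Monoid M] [Fintype M]
    (hreg : ∀ a : M, ∃ x : M, a * x * a = a)
    (hld : ∀ m x : M, ∃ y : M, m * x = y * m) :
    (∀ e f : M, IsIdempotentElem e → IsIdempotentElem f →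
        {x : M | ∃ a : M, x = e * a} = {x : M | ∃ a : M, x = f * a} → e = f) ∧
      (∀ m : M, ∃ e : M, IsIdempotentElem e ∧
        {x : M | ∃ a : M, x = e * a} = {x : M | ∃ a : M, x = m * a}) ∧
      (∀ e f : M, IsIdempotentElem e → IsIdempotentElem f →
        ({x : M | ∃ a : M, x = e * a} ⊆ {x : M | ∃ a : M, x = f * a} ↔ f * e = e)) := by
  have key : ∀ e f : M, IsIdempotentElem e → IsIdempotentElem f →
      ({x : M | ∃ a : M, x = e * a} ⊆ {x : M | ∃ a : M, x = f * a} ↔ f * e = e) := by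
    intro e f he hf
    constructor
    · intro h
      obtain ⟨a, ha⟩ := h ⟨1, (mul_one e).symm⟩
      rw [ha, ← mul_assoc, hf]
    · intro h x ⟨a, ha⟩
      exact ⟨e * a, by rw [ha, ← mul_assoc, h]⟩
  refine ⟨?_, ?_, key⟩
  · intro e f he hf hset
    have h1 : f * e = e := (key e f he hf).mp (hset.le)
    have h2 : e * f = f := (key f e hf he).mp (hset.ge)
    obtain ⟨y, hy⟩ := hld e f
    have : f * e = f := by
      calc f * e = y * e * e := by rw [← hy, h2]
      _ = y * e := by rw [mul_assoc, he]
      _ = f := by rw [← hy, h2]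
    rw [← this, h1]
  · intro m
    obtain ⟨x, hx⟩ := hreg m
    refine ⟨m * x, ?_, ?_⟩
    · show m * x * (m * x) = m * x
      rw [← mul_assoc, hx]
    · ext z
      constructor
      · rintro ⟨a, rfl⟩; exact ⟨x * a, by rw [mul_assoc]⟩
      · rintro ⟨a, rfl⟩; exact ⟨m * a, by rw [← mul_assoc, hx]⟩
end

section
/- Let M be a finite regular left duo monoid. The following are equivalent: (1) Green's relation ℛ is a congruence, i.e. for all a, b, c ∈ M, aM = bM implies acM = bcM; (2) for all m, n ∈ M and all a, b, c ≥ 1 such that m^a, n^b and (mn)^c are idempotent, one has (mn)^c = m^a · n^b; (3) for every m ∈ M, every idempotent w with mw = wm = m, every m' ∈ M with mm' = m'm = w, and every idempotent e of M, one has m e m' = w e. -/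
section Aux
variable {M : Type*} [Monoid M]

/-- In a finite monoid every element has an idempotent power. -/
lemma aux_exists_idem_pow_s9 [Finite M] (m : M) :
    ∃ n : ℕ, 1 ≤ n ∧ IsIdempotentElem (m ^ n) := by
  obtain ⟨i, j, hne, hij⟩ := Finite.exists_ne_map_eq_of_infinite (fun n : ℕ => m ^ n)
  wlog hlt : i < j generalizing i j
  · exact this j i hne.symm hij.symm (by omega)
  set d := j - i with hd
  have hd1 : 1 ≤ d := by omega
  have key : ∀ t : ℕ, m ^ (i + t) = m ^ (i + t + d) := by
    intro t
    have : m ^ i = m ^ (i + d) := by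
      simpa [hd, Nat.add_sub_cancel' hlt.le] using hij
    calc m ^ (i + t) = m ^ i * m ^ t := pow_add m i t
      _ = m ^ (i + d) * m ^ t := by rw [this]
      _ = m ^ (i + d + t) := (pow_add m (i + d) t).symm
      _ = m ^ (i + t + d) := by congr 1; omega
  have key2 : ∀ k t : ℕ, m ^ (i + t) = m ^ (i + t + k * d) := by
    intro k
    induction k with
    | zero => simp
    | succ k ih =>
      intro t
      have h1 := key (t + k * d)
      have e1 : i + (t + k * d) = i + t + k * d := by ring
      have e2 : i + t + k * d + d = i + t + (k + 1) * d := by ring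
      rw [e1, e2] at h1
      rw [ih t, h1]
  refine ⟨d * (i + 1), by nlinarith, ?_⟩
  have ht : i + (d * (i + 1) - i) = d * (i + 1) := by
    have : i ≤ d * (i + 1) := by nlinarith
    omega
  have h2 : d * (i + 1) + d * (i + 1) = i + (d * (i + 1) - i) + (i + 1) * d := by
    have : i ≤ d * (i + 1) := by nlinarith
    have := ht
    nlinarith [this]
  unfold IsIdempotentElem
  rw [← pow_add, h2, ← key2 (i + 1) (d * (i + 1) - i), ht]

/-- idempotent to the n-th power, n ≥ 1. -/
lemma aux_idem_pow {e : M} (he : IsIdempotentElem e) {n : ℕ} (hn : 1 ≤ n) :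
    e ^ n = e := by
  obtain ⟨k, rfl⟩ : ∃ k, n = k + 1 := ⟨n - 1, by omega⟩
  exact he.pow_succ_eq k

/-- Uniqueness of the idempotent power. -/
lemma aux_idem_pow_unique (m : M) {a b : ℕ} (ha : 1 ≤ a) (hb : 1 ≤ b)
    (hia : IsIdempotentElem (m ^ a)) (hib : IsIdempotentElem (m ^ b)) :
    m ^ a = m ^ b := by
  calc m ^ a = (m ^ a) ^ b := (aux_idem_pow hia hb).symm
    _ = (m ^ b) ^ a := by rw [← pow_mul, ← pow_mul, Nat.mul_comm]
    _ = m ^ b := aux_idem_pow hib ha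

/-- Left-duo sandwich identity: `q z q = q z` for `q` idempotent. -/
lemma aux_sandwich (hld : ∀ m x : M, ∃ y : M, m * x = y * m)
    {q : M} (hq : IsIdempotentElem q) (z : M) : q * z * q = q * z := by
  obtain ⟨y, hy⟩ := hld q z
  rw [hy, mul_assoc, hq]

/-- The product of two idempotents is idempotent (in a left duo monoid). -/
lemma aux_idem_mul (hld : ∀ m x : M, ∃ y : M, m * x = y * m)
    {e f : M} (he : IsIdempotentElem e) (hf : IsIdempotentElem f) :
    IsIdempotentElem (e * f) := by
  have h1 : e * f * e = e * f := aux_sandwich hld he f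
  show e * f * (e * f) = e * f
  rw [← mul_assoc, h1, mul_assoc, hf]

/-- Every element is fixed by its idempotent power (regular left duo). -/
lemma aux_pow_fix (hreg : ∀ a : M, ∃ x : M, a * x * a = a)
    (hld : ∀ m x : M, ∃ y : M, m * x = y * m)
    (m : M) {n : ℕ} (hn : 1 ≤ n) (hidem : IsIdempotentElem (m ^ n)) :
    m ^ n * m = m ∧ m * m ^ n = m := by
  obtain ⟨x, hx⟩ := hreg m
  have he0 : IsIdempotentElem (m * x) := by
    show m * x * (m * x) = m * x
    rw [← mul_assoc, hx]
  have he0m : m * x * m = m := hx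
  have hme0 : m * (m * x) = m := by
    have h := aux_sandwich hld he0 m
    rw [he0m] at h
    exact h
  have key : ∀ k : ℕ, m = m ^ (k + 1) * x ^ k := by
    intro k
    induction k with
    | zero => simp
    | succ k ih =>
      calc m = m ^ (k + 1) * x ^ k := ih
        _ = m ^ k * m * x ^ k := by rw [pow_succ]
        _ = m ^ k * (m * (m * x)) * x ^ k := by rw [hme0]
        _ = m ^ k * m * m * (x * x ^ k) := by
            simp only [mul_assoc]
        _ = m ^ (k + 2) * x ^ (k + 1) := by
            rw [← pow_succ, ← pow_succ, ← pow_succ']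
  have hsplit : m = m ^ n * (m * x ^ n) := by
    calc m = m ^ (n + 1) * x ^ n := key n
      _ = m ^ n * m * x ^ n := by rw [pow_succ]
      _ = m ^ n * (m * x ^ n) := by rw [mul_assoc]
  have h1 : m ^ n * m = m := by
    have h : m ^ n * (m ^ n * (m * x ^ n)) = m ^ n * (m * x ^ n) := by
      rw [← mul_assoc, hidem]
    rw [← hsplit] at h
    exact h
  refine ⟨h1, ?_⟩
  calc m * m ^ n = m ^ (n + 1) := by rw [← pow_succ']
    _ = m ^ n * m := by rw [pow_succ]
    _ = m := h1

/-- `aM = (aⁿ)M` when `aⁿ a = a`. -/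
lemma aux_rset_pow (m : M) {n : ℕ} (hn : 1 ≤ n) (hfix : m ^ n * m = m) :
    {x : M | ∃ y : M, x = m * y} = {x : M | ∃ y : M, x = m ^ n * y} := by
  obtain ⟨k, rfl⟩ : ∃ k, n = k + 1 := ⟨n - 1, by omega⟩
  ext z
  constructor
  · rintro ⟨y, rfl⟩
    exact ⟨m * y, by rw [← mul_assoc, hfix]⟩
  · rintro ⟨y, rfl⟩
    exact ⟨m ^ k * y, by rw [← mul_assoc, ← pow_succ']⟩

/-- Idempotents with the same principal right ideal are equal. -/
lemma aux_idem_rset_eq (hld : ∀ m x : M, ∃ y : M, m * x = y * m)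
    {e f : M} (he : IsIdempotentElem e) (hf : IsIdempotentElem f)
    (h : {x : M | ∃ y : M, x = e * y} = {x : M | ∃ y : M, x = f * y}) : e = f := by
  have h1 : e ∈ {x : M | ∃ y : M, x = f * y} := h ▸ ⟨1, (mul_one e).symm⟩
  have h2 : f ∈ {x : M | ∃ y : M, x = e * y} := h.symm ▸ ⟨1, (mul_one f).symm⟩
  obtain ⟨y, hy⟩ := h1
  obtain ⟨z, hz⟩ := h2
  have hfe : f * e = e := by rw [hy, ← mul_assoc, hf]
  have hef : e * f = f := by rw [hz, ← mul_assoc, he]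
  calc e = f * e := hfe.symm
    _ = e * f * e := by rw [hef]
    _ = e * f := aux_sandwich hld he f
    _ = f := hef

/-- Right sets are a left congruence. -/
lemma aux_rset_lmul {a b : M} (c : M)
    (h : {x : M | ∃ y : M, x = a * y} = {x : M | ∃ y : M, x = b * y}) :
    {x : M | ∃ y : M, x = c * a * y} = {x : M | ∃ y : M, x = c * b * y} := by
  have ha : a ∈ {x : M | ∃ y : M, x = b * y} := h ▸ ⟨1, (mul_one a).symm⟩
  have hb : b ∈ {x : M | ∃ y : M, x = a * y} := h.symm ▸ ⟨1, (mul_one b).symm⟩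
  obtain ⟨y, hy⟩ := ha
  obtain ⟨z, hz⟩ := hb
  ext w
  constructor
  · rintro ⟨u, rfl⟩
    exact ⟨y * u, by rw [hy]; simp [mul_assoc]⟩
  · rintro ⟨u, rfl⟩
    exact ⟨z * u, by rw [hz]; simp [mul_assoc]⟩

end Aux


section Aux2
variable {M : Type*} [Monoid M] [Finite M]

/-- Key consequence of condition (3): the idempotent power of `z * h` (`h` idempotent)
is `zˢ * h` where `zˢ` is the idempotent power of `z`. -/
lemma aux_key (hreg : ∀ a : M, ∃ x : M, a * x * a = a)
    (hld : ∀ m x : M, ∃ y : M, m * x = y * m)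
    (h3 : ∀ m w m' e : M, IsIdempotentElem w → m * w = m → w * m = m →
      m * m' = w → m' * m = w → IsIdempotentElem e → m * e * m' = w * e)
    (z : M) {s : ℕ} (hs : 1 ≤ s) (hiz : IsIdempotentElem (z ^ s))
    {h : M} (hh : IsIdempotentElem h) :
    ∃ K : ℕ, 1 ≤ K ∧ IsIdempotentElem ((z * h) ^ K) ∧ (z * h) ^ K = z ^ s * h := by
  obtain ⟨hfix1, hfix2⟩ := aux_pow_fix hreg hld z hs hiz
  have hzz' : z * z ^ (2 * s - 1) = z ^ s := by
    rw [← pow_succ', show 2 * s - 1 + 1 = 2 * s from by omega, two_mul, pow_add]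
    exact hiz
  have hz'z : z ^ (2 * s - 1) * z = z ^ s := by
    rw [← pow_succ, show 2 * s - 1 + 1 = 2 * s from by omega, two_mul, pow_add]
    exact hiz
  have h3' : z * h * z ^ (2 * s - 1) = z ^ s * h :=
    h3 z (z ^ s) (z ^ (2 * s - 1)) h hiz hfix2 hfix1 hzz' hz'z hh
  have hswap : z * h * z ^ s = z ^ s * h * z := by
    calc z * h * z ^ s = z * h * (z ^ (2 * s - 1) * z) := by rw [hz'z]
      _ = z * h * z ^ (2 * s - 1) * z := by rw [← mul_assoc]
      _ = z ^ s * h * z := by rw [h3']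
  have hform : ∀ k : ℕ, (z * h) ^ (k + 1) = z * h * z ^ k := by
    intro k
    induction k with
    | zero => simp
    | succ k ih =>
      calc (z * h) ^ (k + 1 + 1) = (z * h) ^ (k + 1) * (z * h) := pow_succ _ _
        _ = z * h * z ^ k * (z * h) := by rw [ih]
        _ = z * h * (z ^ k * z) * h := by simp only [mul_assoc]
        _ = z * h * z ^ (k + 1) * h := by rw [← pow_succ]
        _ = z * (h * z ^ (k + 1) * h) := by simp only [mul_assoc]
        _ = z * (h * z ^ (k + 1)) := by rw [aux_sandwich hld hh (z ^ (k + 1))]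
        _ = z * h * z ^ (k + 1) := by rw [← mul_assoc]
  obtain ⟨v, hv, hiv⟩ := aux_exists_idem_pow_s9 (z * h)
  have h2sv : 2 ≤ 2 * s * v := by nlinarith
  refine ⟨2 * s * v, by omega, ?_, ?_⟩
  · have hpv : (z * h) ^ (2 * s * v) = (z * h) ^ v := by
      rw [show 2 * s * v = v * (2 * s) from by ring, pow_mul,
        aux_idem_pow hiv (by omega)]
    rw [hpv]
    exact hiv
  · have hKpow : z ^ (2 * s * v) = z ^ s := by
      rw [show 2 * s * v = s * (2 * v) from by ring, pow_mul]
      exact aux_idem_pow hiz (by omega)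
    have hwzk : z ^ s * z ^ (2 * s * v - 1) = z ^ (2 * s * v - 1) := by
      obtain ⟨k, hk⟩ : ∃ k, 2 * s * v - 1 = k + 1 := ⟨2 * s * v - 2, by omega⟩
      rw [hk, pow_succ', ← mul_assoc, hfix1]
    calc (z * h) ^ (2 * s * v) = (z * h) ^ (2 * s * v - 1 + 1) := by
          rw [show 2 * s * v - 1 + 1 = 2 * s * v from by omega]
      _ = z * h * z ^ (2 * s * v - 1) := hform _
      _ = z * h * (z ^ s * z ^ (2 * s * v - 1)) := by rw [hwzk]
      _ = z * h * z ^ s * z ^ (2 * s * v - 1) := by rw [← mul_assoc]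
      _ = z ^ s * h * z * z ^ (2 * s * v - 1) := by rw [hswap]
      _ = z ^ s * h * (z * z ^ (2 * s * v - 1)) := by rw [mul_assoc]
      _ = z ^ s * h * z ^ (2 * s * v) := by
          rw [← pow_succ', show 2 * s * v - 1 + 1 = 2 * s * v from by omega]
      _ = z ^ s * h * z ^ s := by rw [hKpow]
      _ = z ^ s * h := aux_sandwich hld hiz h

end Aux2

/-- For a finite regular left duo monoid `M`, the following are equivalent:
(1) Green's relation ℛ is a congruence (`aM = bM` implies `acM = bcM`);
(2) `(mn)^c = m^a * n^b` whenever `m^a`, `n^b`, `(mn)^c` are idempotent powers;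
(3) `m * e * m' = w * e` for every `m`, every idempotent `w` with `mw = wm = m`, every `m'`
with `mm' = m'm = w`, and every idempotent `e`. -/
theorem stmt_9 (M : Type*) [Monoid M] [Fintype M]
    (hreg : ∀ a : M, ∃ x : M, a * x * a = a)
    (hld : ∀ m x : M, ∃ y : M, m * x = y * m) :
    ((∀ a b c : M,
        {x : M | ∃ y : M, x = a * y} = {x : M | ∃ y : M, x = b * y} →
        {x : M | ∃ y : M, x = a * c * y} = {x : M | ∃ y : M, x = b * c * y}) ↔
      (∀ (m n : M) (a b c : ℕ), 1 ≤ a → 1 ≤ b → 1 ≤ c →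
        IsIdempotentElem (m ^ a) → IsIdempotentElem (n ^ b) →
        IsIdempotentElem ((m * n) ^ c) → (m * n) ^ c = m ^ a * n ^ b)) ∧
    ((∀ (m n : M) (a b c : ℕ), 1 ≤ a → 1 ≤ b → 1 ≤ c →
        IsIdempotentElem (m ^ a) → IsIdempotentElem (n ^ b) →
        IsIdempotentElem ((m * n) ^ c) → (m * n) ^ c = m ^ a * n ^ b) ↔
      (∀ m w m' e : M, IsIdempotentElem w → m * w = m → w * m = m →
        m * m' = w → m' * m = w → IsIdempotentElem e → m * e * m' = w * e)) := by
  have imp12 : (∀ a b c : M,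
      {x : M | ∃ y : M, x = a * y} = {x : M | ∃ y : M, x = b * y} →
      {x : M | ∃ y : M, x = a * c * y} = {x : M | ∃ y : M, x = b * c * y}) →
      (∀ (m n : M) (a b c : ℕ), 1 ≤ a → 1 ≤ b → 1 ≤ c →
        IsIdempotentElem (m ^ a) → IsIdempotentElem (n ^ b) →
        IsIdempotentElem ((m * n) ^ c) → (m * n) ^ c = m ^ a * n ^ b) := by
    intro h1 m n a b c ha hb hc hia hib hic
    obtain ⟨hfm1, -⟩ := aux_pow_fix hreg hld m ha hia
    obtain ⟨hfn1, -⟩ := aux_pow_fix hreg hld n hb hib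
    obtain ⟨hfmn1, -⟩ := aux_pow_fix hreg hld (m * n) hc hic
    have hsm : {x : M | ∃ y : M, x = m * y} = {x : M | ∃ y : M, x = m ^ a * y} :=
      aux_rset_pow m ha hfm1
    have hsn : {x : M | ∃ y : M, x = n * y} = {x : M | ∃ y : M, x = n ^ b * y} :=
      aux_rset_pow n hb hfn1
    have h2 : {x : M | ∃ y : M, x = m * n * y} = {x : M | ∃ y : M, x = m ^ a * n * y} :=
      h1 m (m ^ a) n hsm
    have h3 : {x : M | ∃ y : M, x = m ^ a * n * y} =
        {x : M | ∃ y : M, x = m ^ a * n ^ b * y} :=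
      aux_rset_lmul (m ^ a) hsn
    have hef : IsIdempotentElem (m ^ a * n ^ b) := aux_idem_mul hld hia hib
    have h4 : {x : M | ∃ y : M, x = m * n * y} = {x : M | ∃ y : M, x = (m * n) ^ c * y} :=
      aux_rset_pow (m * n) hc hfmn1
    exact aux_idem_rset_eq hld hic hef (by rw [← h4, h2, h3])
  have imp21 : (∀ (m n : M) (a b c : ℕ), 1 ≤ a → 1 ≤ b → 1 ≤ c →
      IsIdempotentElem (m ^ a) → IsIdempotentElem (n ^ b) →
      IsIdempotentElem ((m * n) ^ c) → (m * n) ^ c = m ^ a * n ^ b) →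
      (∀ a b c : M,
      {x : M | ∃ y : M, x = a * y} = {x : M | ∃ y : M, x = b * y} →
      {x : M | ∃ y : M, x = a * c * y} = {x : M | ∃ y : M, x = b * c * y}) := by
    intro h2 a b c hab
    obtain ⟨s, hs, hia⟩ := aux_exists_idem_pow_s9 a
    obtain ⟨t, ht, hib⟩ := aux_exists_idem_pow_s9 b
    obtain ⟨u, hu, hic⟩ := aux_exists_idem_pow_s9 c
    obtain ⟨v, hv, hiac⟩ := aux_exists_idem_pow_s9 (a * c)
    obtain ⟨p, hp, hibc⟩ := aux_exists_idem_pow_s9 (b * c)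
    obtain ⟨hfa1, -⟩ := aux_pow_fix hreg hld a hs hia
    obtain ⟨hfb1, -⟩ := aux_pow_fix hreg hld b ht hib
    obtain ⟨hfac1, -⟩ := aux_pow_fix hreg hld (a * c) hv hiac
    obtain ⟨hfbc1, -⟩ := aux_pow_fix hreg hld (b * c) hp hibc
    have hw : a ^ s = b ^ t := aux_idem_rset_eq hld hia hib
      (by rw [← aux_rset_pow a hs hfa1, hab, aux_rset_pow b ht hfb1])
    have heq : (a * c) ^ v = (b * c) ^ p := by
      rw [h2 a c s u v hs hu hv hia hic hiac, h2 b c t u p ht hu hp hib hic hibc, hw]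
    rw [aux_rset_pow (a * c) hv hfac1, aux_rset_pow (b * c) hp hfbc1, heq]
  have imp23 : (∀ (m n : M) (a b c : ℕ), 1 ≤ a → 1 ≤ b → 1 ≤ c →
      IsIdempotentElem (m ^ a) → IsIdempotentElem (n ^ b) →
      IsIdempotentElem ((m * n) ^ c) → (m * n) ^ c = m ^ a * n ^ b) →
      (∀ m w m' e : M, IsIdempotentElem w → m * w = m → w * m = m →
        m * m' = w → m' * m = w → IsIdempotentElem e → m * e * m' = w * e) := by
    intro h2 m w m' e hw hmw hwm hmm' hm'm he
    obtain ⟨a, ha, hia⟩ := aux_exists_idem_pow_s9 m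
    have hcomm : Commute m m' := by
      show m * m' = m' * m
      rw [hmm', hm'm]
    have hpow : m ^ a * m' ^ a = w := by
      rw [← hcomm.mul_pow, hmm']
      exact aux_idem_pow hw ha
    have hma_w : m ^ a * w = m ^ a := by
      obtain ⟨k, rfl⟩ : ∃ k, a = k + 1 := ⟨a - 1, by omega⟩
      rw [pow_succ, mul_assoc, hmw]
    have hmaw : m ^ a = w := by
      calc m ^ a = m ^ a * w := hma_w.symm
        _ = m ^ a * (m ^ a * m' ^ a) := by rw [hpow]
        _ = m ^ a * m ^ a * m' ^ a := by rw [mul_assoc]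
        _ = m ^ a * m' ^ a := by rw [hia]
        _ = w := hpow
    obtain ⟨c, hc, hime⟩ := aux_exists_idem_pow_s9 (m * e)
    have he1 : IsIdempotentElem (e ^ 1) := by rwa [pow_one]
    have hkey : (m * e) ^ c = w * e := by
      rw [h2 m e a 1 c ha le_rfl hc hia he1 hime, pow_one, hmaw]
    obtain ⟨hfix, -⟩ := aux_pow_fix hreg hld (m * e) hc hime
    have hme : m * e = w * (e * m) := by
      calc m * e = (m * e) ^ c * (m * e) := hfix.symm
        _ = w * e * (m * e) := by rw [hkey]
        _ = w * (e * m * e) := by simp only [mul_assoc]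
        _ = w * (e * m) := by rw [aux_sandwich hld he m]
    calc m * e * m' = w * (e * m) * m' := by rw [hme]
      _ = w * (e * (m * m')) := by simp only [mul_assoc]
      _ = w * (e * w) := by rw [hmm']
      _ = w * e * w := by rw [mul_assoc]
      _ = w * e := aux_sandwich hld hw e
  have imp31 : (∀ m w m' e : M, IsIdempotentElem w → m * w = m → w * m = m →
      m * m' = w → m' * m = w → IsIdempotentElem e → m * e * m' = w * e) →
      (∀ a b c : M,
      {x : M | ∃ y : M, x = a * y} = {x : M | ∃ y : M, x = b * y} →
      {x : M | ∃ y : M, x = a * c * y} = {x : M | ∃ y : M, x = b * c * y}) := by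
    intro h3 a b c hab
    obtain ⟨s, hs, hia⟩ := aux_exists_idem_pow_s9 a
    obtain ⟨t, ht, hib⟩ := aux_exists_idem_pow_s9 b
    obtain ⟨u, hu, hic⟩ := aux_exists_idem_pow_s9 c
    obtain ⟨hfa1, -⟩ := aux_pow_fix hreg hld a hs hia
    obtain ⟨hfb1, -⟩ := aux_pow_fix hreg hld b ht hib
    obtain ⟨hfc1, -⟩ := aux_pow_fix hreg hld c hu hic
    have hw : a ^ s = b ^ t := aux_idem_rset_eq hld hia hib
      (by rw [← aux_rset_pow a hs hfa1, hab, aux_rset_pow b ht hfb1])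
    obtain ⟨K, hK, hiK, hKeq⟩ := aux_key hreg hld h3 a hs hia hic
    obtain ⟨L, hL, hiL, hLeq⟩ := aux_key hreg hld h3 b ht hib hic
    obtain ⟨hfK1, -⟩ := aux_pow_fix hreg hld (a * c ^ u) hK hiK
    obtain ⟨hfL1, -⟩ := aux_pow_fix hreg hld (b * c ^ u) hL hiL
    calc {x : M | ∃ y : M, x = a * c * y}
        = {x : M | ∃ y : M, x = a * c ^ u * y} :=
          aux_rset_lmul a (aux_rset_pow c hu hfc1)
      _ = {x : M | ∃ y : M, x = (a * c ^ u) ^ K * y} := aux_rset_pow _ hK hfK1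
      _ = {x : M | ∃ y : M, x = (b * c ^ u) ^ L * y} := by rw [hKeq, hLeq, hw]
      _ = {x : M | ∃ y : M, x = b * c ^ u * y} := (aux_rset_pow _ hL hfL1).symm
      _ = {x : M | ∃ y : M, x = b * c * y} :=
          (aux_rset_lmul b (aux_rset_pow c hu hfc1)).symm
  exact ⟨⟨imp12, imp21⟩, ⟨imp23, fun h3 => imp12 (imp31 h3)⟩⟩
end

section
/- Let M be a finite left regular band of groups with set of idempotents B, let K be a commutative ring, and let e ∈ B. Let G_e denote the group of units of the monoid eMe (a finite group with identity e). Then inside the monoid algebra KM, for every element a of the K-linear span of G_e and every element x of the K-linear span of B, one has a·x = e·x·a, where e is identified with the corresponding basis element of KM. -/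
lemma stmt10_key {M : Type*} [Monoid M]
    (hld : ∀ m x : M, ∃ y : M, m * x = y * m)
    (hR : ∀ a b c : M,
      {x : M | ∃ y : M, x = a * y} = {x : M | ∃ y : M, x = b * y} →
      {x : M | ∃ y : M, x = a * c * y} = {x : M | ∃ y : M, x = b * c * y})
    (e u v f : M) (he : e * e = e) (hu : e * u * e = u) (hv : e * v * e = v)
    (huv : u * v = e) (hvu : v * u = e) (hf : f * f = f) :
    u * f = e * f * u := by
  have heu : e * u = u := by
    conv_lhs => rw [← hu]
    rw [← mul_assoc, ← mul_assoc, he, hu]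
  have hue : u * e = u := by
    conv_lhs => rw [← hu]
    rw [mul_assoc, he, hu]
  have hve : v * e = v := by
    conv_lhs => rw [← hv]
    rw [mul_assoc, he, hv]
  -- u * f * e = u * f
  obtain ⟨p, hp⟩ := hld u f
  have hufe : u * f * e = u * f := by
    rw [hp, mul_assoc, hue]
  -- uM = eM
  have hset : {x : M | ∃ y : M, x = u * y} = {x : M | ∃ y : M, x = e * y} := by
    ext z
    simp only [Set.mem_setOf_eq]
    constructor
    · rintro ⟨y, rfl⟩
      exact ⟨u * y, by rw [← mul_assoc, heu]⟩
    · rintro ⟨y, rfl⟩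
      exact ⟨v * y, by rw [← mul_assoc, huv]⟩
  have hset2 := hR u e f hset
  have huf_mem : u * f ∈ {x : M | ∃ y : M, x = e * f * y} := by
    rw [← hset2]; exact ⟨1, (mul_one _).symm⟩
  have hef_mem : e * f ∈ {x : M | ∃ y : M, x = u * f * y} := by
    rw [hset2]; exact ⟨1, (mul_one _).symm⟩
  obtain ⟨s, hs⟩ := huf_mem
  obtain ⟨r, hr⟩ := hef_mem
  -- e*f is a left identity for u*f
  obtain ⟨q, hq⟩ := hld v f
  have hvfe : v * f * e = v * f := by
    rw [hq, mul_assoc, hve]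
  have hefe : e * f * e = e * f := by
    have h1 : e * f = u * (v * f) := by rw [← mul_assoc, huv]
    rw [h1, mul_assoc u (v * f) e, show v * f * e = (v * f) * e from rfl, hvfe]
  have hefidem : (e * f) * (e * f) = e * f := by
    rw [← mul_assoc, hefe, mul_assoc, hf]
  have hefef : (e * f) * (e * f) * s = (e * f) * s := by
    rw [hefidem]
  have hefuf : (e * f) * (u * f) = u * f := by
    rw [hs, ← mul_assoc, hefef, ← hs]
  -- t = u*f*v is idempotent
  have hufvu : u * f * v * u = u * f := by
    rw [mul_assoc (u * f) v u, hvu, hufe]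
  have ht2 : (u * f * v) * (u * f * v) = u * f * v := by
    have h1 : (u * f * v) * (u * f * v) = u * f * v * u * (f * v) := by
      simp [mul_assoc]
    rw [h1, hufvu, ← mul_assoc, mul_assoc u f f, hf]
  -- ef * t = t
  have heft : (e * f) * (u * f * v) = u * f * v := by
    rw [show u * f * v = (u * f) * v from rfl, ← mul_assoc, hefuf]
  -- ef ∈ tM
  have heftm : e * f = (u * f * v) * (u * r) := by
    rw [← mul_assoc, hufvu, ← hr]
  obtain ⟨n, hn⟩ := hld (u * f * v) (u * r)
  have hefn : e * f = n * (u * f * v) := heftm.trans hn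
  have heft' : (e * f) * (u * f * v) = e * f := by
    rw [hefn, mul_assoc, ht2]
  have h9 : u * f * v = e * f := heft.symm.trans heft'
  rw [← h9, hufvu]


/-- Let `M` be a finite left regular band of groups with set of idempotents
`B`, `K` a commutative ring, and `e ∈ B`.  Inside the monoid algebra `KM`, for every `a` in
the `K`-span of the group of units `G_e` of `eMe` and every `x` in the `K`-span of `B`,
one has `a * x = e * x * a`. -/
theorem stmt_10 (M : Type*) [Monoid M] [Fintype M] (K : Type*) [CommRing K]
    (hreg : ∀ a : M, ∃ x : M, a * x * a = a)
    (hld : ∀ m x : M, ∃ y : M, m * x = y * m)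
    (hR : ∀ a b c : M,
      {x : M | ∃ y : M, x = a * y} = {x : M | ∃ y : M, x = b * y} →
      {x : M | ∃ y : M, x = a * c * y} = {x : M | ∃ y : M, x = b * c * y})
    (e : M) (he : IsIdempotentElem e)
    (a x : MonoidAlgebra K M)
    (ha : a ∈ Submodule.span K (⇑(MonoidAlgebra.of K M) ''
      {u : M | e * u * e = u ∧ ∃ v : M, e * v * e = v ∧ u * v = e ∧ v * u = e}))
    (hx : x ∈ Submodule.span K (⇑(MonoidAlgebra.of K M) '' {u : M | IsIdempotentElem u})) :
    a * x = MonoidAlgebra.of K M e * x * a := by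
  induction ha using Submodule.span_induction with
  | mem a' ha' =>
    induction hx using Submodule.span_induction with
    | mem x' hx' =>
      obtain ⟨u, ⟨hu, v, hv, huv, hvu⟩, rfl⟩ := ha'
      obtain ⟨f, hf, rfl⟩ := hx'
      rw [← map_mul, ← map_mul, ← map_mul]
      exact congrArg _ (stmt10_key hld hR e u v f he hu hv huv hvu hf)
    | zero => simp
    | add y z _ _ hy hz => simp only [mul_add, add_mul, hy, hz]
    | smul c y _ hy => simp only [mul_smul_comm, smul_mul_assoc, hy]
  | zero => simp
  | add y z _ _ hy hz => simp only [mul_add, add_mul, hy, hz]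
  | smul c y _ hy => simp only [mul_smul_comm, smul_mul_assoc, hy]
end

section
/- Let M be a finite regular left duo monoid, K a field, and e an idempotent of M. Let L_e = {m ∈ M | Mm = Me} be the ℒ-class of e. Inside the monoid algebra KM, the K-linear span N of Me and the K-linear span N' of Me \ L_e are KM-submodules of the left regular module KM, and the quotient KM-module KL_e := N/N' is a projective KM-module. -/
/-!
Since `M` is left duo, every left ideal `S` of `M` is two-sided, and the span `KS` has a right
identity `u`: peel off an `ℒ`-class `L_y` with `My` maximal among the `Mz`, `z ∈ S`;
regularity gives an idempotent `f ∈ L_y`, and from a right identity `u'` of `K(S \ L_y)` one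
gets `f + u' - f u'`. For `S = Me \ L_e`, the maps `n ↦ n (1 - u)` from `KMe / KS` to `KM`
and `a ↦ a e` back compose to the identity, so `KL_e` is a direct summand of `KM`.
-/

open MonoidAlgebra Submodule
open scoped Pointwise

theorem Module.Projective.quotient_of_mul_right {A : Type*} [Ring A] {N N' : Submodule A A}
    {e v : A} (he : e ∈ N) (hv : ∀ n ∈ N', n * v = 0)
    (hve : ∀ n ∈ N, n * v * e - n ∈ N') :
    Module.Projective A (N ⧸ N'.comap N.subtype) := by
  set P := N'.comap N.subtype
  let i : N ⧸ P →ₗ[A] A :=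
    P.liftQ (LinearMap.toSpanSingleton A A v ∘ₗ N.subtype) fun n hn => by simpa using hv n hn
  let s : A →ₗ[A] N ⧸ P := P.mkQ ∘ₗ LinearMap.toSpanSingleton A N ⟨e, he⟩
  refine .of_split i s (LinearMap.ext fun q => ?_)
  obtain ⟨n, rfl⟩ := P.mkQ_surjective q
  refine (Submodule.Quotient.eq P).mpr ?_
  simpa [P, i, s] using hve n n.2

section LeftPrincipal

variable {M : Type*} [Monoid M]

def leftPrincipal (x : M) : Set M := {y | ∃ a, y = a * x}

theorem mem_leftPrincipal_self (x : M) : x ∈ leftPrincipal x := ⟨1, (one_mul x).symm⟩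

theorem mul_mem_leftPrincipal (a x : M) : a * x ∈ leftPrincipal x := ⟨a, rfl⟩

theorem leftPrincipal_subset_of_mem {x y : M} (h : y ∈ leftPrincipal x) :
    leftPrincipal y ⊆ leftPrincipal x := by
  obtain ⟨a, rfl⟩ := h
  rintro _ ⟨b, rfl⟩
  exact ⟨b * a, (mul_assoc b a x).symm⟩

theorem IsIdempotentElem.mul_eq_self_of_mem_leftPrincipal {e x : M} (he : IsIdempotentElem e)
    (hx : x ∈ leftPrincipal e) : x * e = x := by
  obtain ⟨a, rfl⟩ := hx
  rw [mul_assoc, he.eq]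

theorem exists_isIdempotentElem_leftPrincipal_eq {y x : M} (hx : y * x * y = y) :
    ∃ f, IsIdempotentElem f ∧ leftPrincipal f = leftPrincipal y := by
  refine ⟨x * y, by rw [IsIdempotentElem, mul_assoc, ← mul_assoc y, hx], ?_⟩
  refine (leftPrincipal_subset_of_mem (mul_mem_leftPrincipal x y)).antisymm
    (leftPrincipal_subset_of_mem ⟨y, ?_⟩)
  rw [← mul_assoc, hx]

def leftPrincipalSubMulAction (x : M) : SubMulAction M M where
  carrier := leftPrincipal x
  smul_mem' a _ h := leftPrincipal_subset_of_mem h (mul_mem_leftPrincipal a _)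

theorem SubMulAction.mul_mem_of_leftDuo (hld : ∀ m x : M, ∃ y : M, m * x = y * m)
    (S : SubMulAction M M) {x : M} (hx : x ∈ S) (m : M) : x * m ∈ S := by
  obtain ⟨y, hy⟩ := hld x m
  exact hy ▸ S.smul_mem y hx

def SubMulAction.sdiffLClass (S : SubMulAction M M) (y : M)
    (hy : ∀ z ∈ S, leftPrincipal y ⊆ leftPrincipal z → leftPrincipal z = leftPrincipal y) :
    SubMulAction M M where
  carrier := S \ {z | leftPrincipal z = leftPrincipal y}
  smul_mem' a z h := ⟨S.smul_mem a h.1, fun hL => h.2 <| hy z h.1 <|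
    hL ▸ leftPrincipal_subset_of_mem (mul_mem_leftPrincipal a z)⟩

end LeftPrincipal

section MonoidAlgebra

variable {K M : Type*} [CommRing K] [Monoid M]

theorem mul_mem_span_of_image {S T U : Set M} (h : ∀ x ∈ S, ∀ y ∈ T, x * y ∈ U)
    {p q : MonoidAlgebra K M} (hp : p ∈ span K (of K M '' S)) (hq : q ∈ span K (of K M '' T)) :
    p * q ∈ span K (of K M '' U) := by
  refine span_mono (Set.image_mono (Set.mul_subset_iff.mpr h)) ?_
  rw [Set.image_mul, ← span_mul_span]
  exact mul_mem_mul hp hq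

theorem mul_eq_self_of_mem_span {S : Set M} {a p : MonoidAlgebra K M}
    (h : ∀ x ∈ S, of K M x * a = of K M x) (hp : p ∈ span K (of K M '' S)) : p * a = p :=
  LinearMap.eqOn_span' (f := LinearMap.mulRight K a) (g := LinearMap.id)
    (by rintro _ ⟨x, hx, rfl⟩; exact h x hx) hp

theorem of_mul_mem_span_of_image {S : Set M} (hS : ∀ m, ∀ x ∈ S, m * x ∈ S) (m : M)
    {p : MonoidAlgebra K M} (hp : p ∈ span K (of K M '' S)) :
    of K M m * p ∈ span K (of K M '' S) :=
  mul_mem_span_of_image (S := {m}) (by simpa using hS m) (subset_span ⟨m, rfl, rfl⟩) hp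

theorem mul_of_mem_span_of_image {S : Set M} (hS : ∀ m, ∀ x ∈ S, x * m ∈ S) (m : M)
    {p : MonoidAlgebra K M} (hp : p ∈ span K (of K M '' S)) :
    p * of K M m ∈ span K (of K M '' S) :=
  mul_mem_span_of_image (T := {m}) (by simpa using fun x hx => hS m x hx) hp
    (subset_span ⟨m, rfl, rfl⟩)

variable (K) in
noncomputable def SubMulAction.spanIdeal (S : SubMulAction M M) :
    Submodule (MonoidAlgebra K M) (MonoidAlgebra K M) :=
  submoduleOfSMulMem (span K (of K M '' S)) fun m _ =>
    of_mul_mem_span_of_image (fun a _ => S.smul_mem a) m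

theorem SubMulAction.exists_mul_eq_self_span [Finite M] (hreg : ∀ a : M, ∃ x : M, a * x * a = a)
    (hld : ∀ m x : M, ∃ y : M, m * x = y * m) (S : SubMulAction M M) :
    ∃ u ∈ span K (of K M '' S), ∀ x ∈ S, of K M x * u = of K M x := by
  induction hS : (S : Set M).ncard using Nat.strong_induction_on generalizing S with
  | _ n ih =>
  rcases (S : Set M).eq_empty_or_nonempty with hempty | hne
  · exact ⟨0, Submodule.zero_mem _, fun x hx => absurd hx (hempty.subset · |>.elim)⟩
  obtain ⟨y, hyS, hymax⟩ := (S : Set M).toFinite.exists_maximalFor leftPrincipal _ hne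
  have hy (z : M) (hz : z ∈ S) (h : leftPrincipal y ⊆ leftPrincipal z) :
      leftPrincipal z = leftPrincipal y :=
    (hymax hz h).antisymm h
  set S' := S.sdiffLClass y hy
  have hS'S : (S' : Set M) ⊆ S := Set.sdiff_subset
  have hS'card : (S' : Set M).ncard < n :=
    hS ▸ Set.ncard_lt_ncard ⟨hS'S, fun h => (h hyS).2 rfl⟩ (S : Set M).toFinite
  obtain ⟨u', hu'S', hu'⟩ := ih _ hS'card S' rfl
  obtain ⟨x, hx⟩ := hreg y
  obtain ⟨f, hf, hfy⟩ := exists_isIdempotentElem_leftPrincipal_eq hx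
  have hfS : f ∈ S := by
    obtain ⟨a, rfl⟩ : f ∈ leftPrincipal y := hfy ▸ mem_leftPrincipal_self f
    exact S.smul_mem a hyS
  have hu'S : u' ∈ span K (of K M '' S) := span_mono (Set.image_mono hS'S) hu'S'
  refine ⟨of K M f + u' - of K M f * u', ?_, fun z hz => ?_⟩
  · exact sub_mem (add_mem (subset_span ⟨f, hfS, rfl⟩) hu'S)
      (of_mul_mem_span_of_image (fun a _ => S.smul_mem a) f hu'S)
  rw [mul_sub, mul_add, ← mul_assoc, ← map_mul]
  by_cases hzy : leftPrincipal z = leftPrincipal y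
  · rw [hf.mul_eq_self_of_mem_leftPrincipal (hfy ▸ hzy ▸ mem_leftPrincipal_self z),
      add_sub_cancel_right]
  · have hzS' : z ∈ S' := ⟨hz, hzy⟩
    rw [hu' z hzS', hu' _ (S'.mul_mem_of_leftDuo hld hzS' f), add_sub_cancel_left]

end MonoidAlgebra

/-- Let `M` be a finite regular left duo monoid, `K` a field and `e` an
idempotent of `M`, with ℒ-class `L_e = {m | Mm = Me}`.  Inside `KM`, the `K`-span `N` of
`Me` and the `K`-span `N'` of `Me \ L_e` are `KM`-submodules of the left regular module,
and the quotient `KM`-module `KL_e = N/N'` is projective. -/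
theorem stmt_11 (M : Type*) [Monoid M] [Fintype M] (K : Type*) [Field K]
    (hreg : ∀ a : M, ∃ x : M, a * x * a = a)
    (hld : ∀ m x : M, ∃ y : M, m * x = y * m)
    (e : M) (he : IsIdempotentElem e) :
    ∃ N N' : Submodule (MonoidAlgebra K M) (MonoidAlgebra K M),
      (N : Set (MonoidAlgebra K M)) =
        ↑(Submodule.span K (⇑(MonoidAlgebra.of K M) '' {x : M | ∃ a : M, x = a * e})) ∧
      (N' : Set (MonoidAlgebra K M)) =
        ↑(Submodule.span K (⇑(MonoidAlgebra.of K M) ''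
          ({x : M | ∃ a : M, x = a * e} \
            {x : M | {y : M | ∃ a : M, y = a * x} = {y : M | ∃ a : M, y = a * e}}))) ∧
      Module.Projective (MonoidAlgebra K M) (↥N ⧸ Submodule.comap N.subtype N') := by
  set S := leftPrincipalSubMulAction e
  set I := S.sdiffLClass e fun z hz h => (leftPrincipal_subset_of_mem hz).antisymm h
  refine ⟨S.spanIdeal K, I.spanIdeal K, rfl, rfl, ?_⟩
  obtain ⟨u, huI, hu⟩ := I.exists_mul_eq_self_span (K := K) hreg hld
  have hNe (n : MonoidAlgebra K M) (hn : n ∈ S.spanIdeal K) : n * of K M e = n :=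
    mul_eq_self_of_mem_span
      (fun x hx => by rw [← map_mul, he.mul_eq_self_of_mem_leftPrincipal hx]) hn
  refine .quotient_of_mul_right (v := 1 - u) (subset_span ⟨e, mem_leftPrincipal_self e, rfl⟩)
    (fun n hn => ?_) (fun n hn => ?_)
  · rw [mul_sub, mul_one, mul_eq_self_of_mem_span hu hn, sub_self]
  · rw [mul_sub, mul_one, sub_mul, hNe n hn, sub_sub_cancel_left]
    exact neg_mem <| mul_of_mem_span_of_image (fun m _ hx => I.mul_mem_of_leftDuo hld hx m) e
      ((I.spanIdeal K).smul_mem n huI)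
end

section
/- Let M be a finite regular left duo monoid, K a field, and e an idempotent of M. Set M_{≥e} = {m ∈ M | e ∈ MmM}. Then M_{≥e} is a submonoid of M whose complement M \ M_{≥e} is a two-sided ideal of M, the K-linear map ρ : KM → K[M_{≥e}] determined on basis elements by ρ(m) = m if m ∈ M_{≥e} and ρ(m) = 0 otherwise is a surjective K-algebra homomorphism, and K[M_{≥e}], regarded as a KM-module via ρ, is a projective KM-module. -/
/-!
In a left duo monoid `e ∈ MmM` iff `e ∈ Mm`, which makes `M_{≥e}` closed under products; its
complement is an ideal in any monoid. So sending the complement to `0` is an algebra retraction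
`ρ` of `KM` onto `K[M_{≥e}]`. Let `w = ∏ (1 - f)` over the idempotents `f ∉ M_{≥e}`. Then
`ρ w = 1`, and `t * w = 0` for every `t ∉ M_{≥e}`: by regularity `t = t f` for the idempotent
`f = x t ∉ M_{≥e}`, and `f * KM * (1 - f) = 0` because `f m f = f m`. Hence `a ↦ a * w`
factors through `ρ` and splits it as a map of left `KM`-modules.
-/

open MonoidAlgebra

theorem Module.Projective.of_surjective_of_ker_mul_eq_zero {A B : Type*} [Ring A] [Ring B]
    (ρ : A →+* B) (hρ : Function.Surjective ρ) (w : A) (hw : ρ w = 1)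
    (hker : ∀ a, ρ a = 0 → a * w = 0) :
    letI := Module.compHom B ρ
    Module.Projective A B := by
  let := Module.compHom B ρ
  have mul_w_eq : ∀ a a', ρ a = ρ a' → a * w = a' * w := fun a a' h => by
    rw [← sub_eq_zero, ← sub_mul]
    exact hker _ (by rw [map_sub, h, sub_self])
  let σ : B →ₗ[A] A :=
    { toFun := fun b => Function.surjInv hρ b * w
      map_add' := fun b b' => by
        rw [← add_mul]
        exact mul_w_eq _ _ (by simp only [map_add, Function.surjInv_eq hρ])
      map_smul' := fun a b => by
        rw [RingHom.id_apply, smul_eq_mul, ← mul_assoc]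
        exact mul_w_eq _ _ (by simp only [map_mul, Function.surjInv_eq hρ]; rfl) }
  let ρₗ : A →ₗ[A] B :=
    { toFun := ρ
      map_add' := map_add ρ
      map_smul' := map_mul ρ }
  refine Module.Projective.of_split σ ρₗ (LinearMap.ext fun b => ?_)
  show ρ (Function.surjInv hρ b * w) = b
  rw [map_mul, Function.surjInv_eq hρ, hw, mul_one]

theorem mul_list_prod_one_sub_eq_zero {R : Type*} [Ring R] {f : R} (hf : ∀ x, f * x * f = f * x)
    {L : List R} (hfL : f ∈ L) : f * (L.map (1 - ·)).prod = 0 := by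
  obtain ⟨s, t, rfl⟩ := List.append_of_mem hfL
  have : f * (s.map (1 - ·)).prod * (1 - f) = 0 := by rw [mul_sub, mul_one, hf, sub_self]
  rw [List.map_append, List.prod_append, List.map_cons, List.prod_cons, ← mul_assoc,
    ← mul_assoc, this, zero_mul]

section Monoid

variable {M : Type*} [Monoid M]

theorem IsIdempotentElem.mul_mul_self_of_leftDuo (hld : ∀ m x : M, ∃ y, m * x = y * m) {f : M}
    (hf : IsIdempotentElem f) (m : M) : f * m * f = f * m := by
  obtain ⟨y, hy⟩ := hld f m
  rw [hy, mul_assoc, hf.eq]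

/-- The paper's `M_{≥e}`. -/
def jAbove (e : M) : Set M := {m | ∃ a b, a * m * b = e}

theorem mem_jAbove_of_mul_mem {e m n : M} (h : m * n ∈ jAbove e) :
    m ∈ jAbove e ∧ n ∈ jAbove e := by
  obtain ⟨a, b, hab⟩ := h
  exact ⟨⟨a, n * b, by rw [← hab]; simp only [mul_assoc]⟩,
    ⟨a * m, b, by rw [← hab]; simp only [mul_assoc]⟩⟩

theorem exists_mul_eq_of_mem_jAbove (hld : ∀ m x : M, ∃ y, m * x = y * m) {e m : M}
    (h : m ∈ jAbove e) : ∃ p, p * m = e := by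
  obtain ⟨a, b, hab⟩ := h
  obtain ⟨y, hy⟩ := hld m b
  exact ⟨a * y, by rw [mul_assoc, ← hy, ← mul_assoc, hab]⟩

def jAboveSubmonoid (hld : ∀ m x : M, ∃ y, m * x = y * m) {e : M} (he : IsIdempotentElem e) :
    Submonoid M where
  carrier := jAbove e
  one_mem' := ⟨e, e, by rw [mul_one, he.eq]⟩
  mul_mem' {m n} hm hn := by
    obtain ⟨p, hp⟩ := exists_mul_eq_of_mem_jAbove hld hm
    obtain ⟨q, hq⟩ := exists_mul_eq_of_mem_jAbove hld hn
    obtain ⟨y, hy⟩ := hld m q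
    refine ⟨p * y, 1, ?_⟩
    calc p * y * (m * n) * 1 = p * (m * q) * n := by rw [hy]; simp only [mul_one, mul_assoc]
      _ = e := by rw [← mul_assoc, hp, mul_assoc, hq, he.eq]

end Monoid

noncomputable section

namespace MonoidAlgebra

section Restrict

variable (K : Type*) [CommSemiring K] {M : Type*} [Monoid M] {S : Submonoid M}
  (hS : ∀ m n, m * n ∈ S → m ∈ S ∧ n ∈ S)

open Classical in
def restrictOf : M →* MonoidAlgebra K S where
  toFun m := if h : m ∈ S then of K S ⟨m, h⟩ else 0
  map_one' := by rw [dif_pos S.one_mem]; rfl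
  map_mul' m n := by
    by_cases hmn : m * n ∈ S
    · obtain ⟨hm, hn⟩ := hS m n hmn
      rw [dif_pos hmn, dif_pos hm, dif_pos hn, ← map_mul]
      rfl
    · rcases not_and_or.1 (mt (fun h => S.mul_mem h.1 h.2) hmn) with hm | hn
      · rw [dif_neg hm, zero_mul, dif_neg hmn]
      · rw [dif_neg hn, mul_zero, dif_neg hmn]

def restrict : MonoidAlgebra K M →ₐ[K] MonoidAlgebra K S := lift K _ M (restrictOf K hS)

variable {K}

theorem mapDomainAlgHom_of {N : Type*} [Monoid N] (f : M →* N) (m : M) :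
    mapDomainAlgHom K K f (of K M m) = of K N (f m) := by
  simp

theorem restrict_of_of_mem {m : M} (hm : m ∈ S) :
    restrict K hS (of K M m) = of K S ⟨m, hm⟩ := by
  rw [restrict, lift_of]
  exact dif_pos hm

theorem restrict_of_of_notMem {m : M} (hm : m ∉ S) : restrict K hS (of K M m) = 0 := by
  rw [restrict, lift_of]
  exact dif_neg hm

theorem restrict_mapDomain_subtype (z : MonoidAlgebra K S) :
    restrict K hS (mapDomainAlgHom K K S.subtype z) = z := by
  induction z using MonoidAlgebra.induction_on with
  | of s =>
    rw [mapDomainAlgHom_of]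
    exact restrict_of_of_mem hS s.2
  | add x y hx hy => rw [map_add, map_add, hx, hy]
  | smul r x hx => rw [map_smul, map_smul, hx]

theorem restrict_surjective : Function.Surjective (restrict K hS) :=
  fun z => ⟨_, restrict_mapDomain_subtype hS z⟩

theorem mul_eq_mapDomain_restrict_mul {w : MonoidAlgebra K M}
    (hw : ∀ t ∉ S, of K M t * w = 0) (x : MonoidAlgebra K M) :
    x * w = mapDomainAlgHom K K S.subtype (restrict K hS x) * w := by
  induction x using MonoidAlgebra.induction_on with
  | of m =>
    by_cases hm : m ∈ S
    · rw [restrict_of_of_mem hS hm, mapDomainAlgHom_of]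
      rfl
    · rw [restrict_of_of_notMem hS hm, map_zero, zero_mul, hw m hm]
  | add x y hx hy => rw [map_add, map_add, add_mul, add_mul, hx, hy]
  | smul r x hx => rw [map_smul, map_smul, smul_mul_assoc, smul_mul_assoc, hx]

end Restrict

section Projective

variable {K : Type*} [CommRing K] {M : Type*} [Monoid M]

theorem of_mul_mul_of {f : M} (hf : ∀ m, f * m * f = f * m) (x : MonoidAlgebra K M) :
    of K M f * x * of K M f = of K M f * x := by
  induction x using MonoidAlgebra.induction_on with
  | of m => rw [← map_mul, ← map_mul, hf]
  | add x y hx hy => rw [mul_add, add_mul, hx, hy]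
  | smul r x hx => rw [mul_smul_comm, smul_mul_assoc, hx]

variable {S : Submonoid M} (hS : ∀ m n, m * n ∈ S → m ∈ S ∧ n ∈ S)
include hS

theorem restrict_list_prod_one_sub_of {L : List M} (hL : ∀ g ∈ L, g ∉ S) :
    restrict K hS ((L.map (of K M)).map (1 - ·)).prod = 1 := by
  rw [map_list_prod, List.map_map, List.map_map]
  refine List.prod_eq_one fun x hx => ?_
  obtain ⟨g, hg, rfl⟩ := List.mem_map.1 hx
  rw [Function.comp_apply, Function.comp_apply, map_sub, map_one,
    restrict_of_of_notMem hS (hL g hg), sub_zero]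

theorem exists_restrict_eq_one_and_of_mul_eq_zero [Finite M]
    (hreg : ∀ a : M, ∃ x, a * x * a = a)
    (hcent : ∀ f : M, IsIdempotentElem f → ∀ m, f * m * f = f * m) :
    ∃ w : MonoidAlgebra K M, restrict K hS w = 1 ∧ ∀ t ∉ S, of K M t * w = 0 := by
  let L := (Set.toFinite {f : M | IsIdempotentElem f ∧ f ∉ S}).toFinset.toList
  have mem_L {f : M} : f ∈ L ↔ IsIdempotentElem f ∧ f ∉ S := by simp [L]
  refine ⟨((L.map (of K M)).map (1 - ·)).prod,
    restrict_list_prod_one_sub_of hS fun g hg => (mem_L.1 hg).2, fun t ht => ?_⟩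
  obtain ⟨x, hx⟩ := hreg t
  have hxt : IsIdempotentElem (x * t) := by
    rw [IsIdempotentElem, mul_assoc, ← mul_assoc t, hx]
  have hxt_mem : x * t ∈ L := mem_L.2 ⟨hxt, fun h => ht (hS x t h).2⟩
  have hxt_w : of K M (x * t) * ((L.map (of K M)).map (1 - ·)).prod = 0 :=
    mul_list_prod_one_sub_eq_zero (of_mul_mul_of (hcent _ hxt)) (List.mem_map_of_mem hxt_mem)
  rw [← hx, mul_assoc, map_mul, mul_assoc, hxt_w, mul_zero]

theorem projective_restrict [Finite M] (hreg : ∀ a : M, ∃ x, a * x * a = a)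
    (hcent : ∀ f : M, IsIdempotentElem f → ∀ m, f * m * f = f * m) :
    letI := Module.compHom (MonoidAlgebra K S) (restrict K hS).toRingHom
    Module.Projective (MonoidAlgebra K M) (MonoidAlgebra K S) := by
  obtain ⟨w, hw_one, hw_zero⟩ :=
    exists_restrict_eq_one_and_of_mul_eq_zero (K := K) hS hreg hcent
  refine Module.Projective.of_surjective_of_ker_mul_eq_zero _ (restrict_surjective hS) w hw_one
    fun a ha => ?_
  rw [mul_eq_mapDomain_restrict_mul hS hw_zero a, show restrict K hS a = 0 from ha, map_zero,
    zero_mul]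

end Projective

end MonoidAlgebra

end

/-- Let `M` be a finite regular left duo monoid, `K` a field and `e` an
idempotent.  Then `M_{≥e} = {m | e ∈ MmM}` is a submonoid whose complement is a two-sided
ideal, the `K`-linear map `ρ : KM → K[M_{≥e}]` killing the complement and fixing `M_{≥e}`
is a surjective `K`-algebra homomorphism, and `K[M_{≥e}]`, regarded as a `KM`-module via
`ρ`, is projective. -/
theorem stmt_12 (M : Type*) [Monoid M] [Fintype M] (K : Type*) [Field K]
    (hreg : ∀ a : M, ∃ x : M, a * x * a = a)
    (hld : ∀ m x : M, ∃ y : M, m * x = y * m)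
    (e : M) (he : IsIdempotentElem e) :
    ∃ S : Submonoid M, (S : Set M) = {m : M | ∃ a b : M, a * m * b = e} ∧
      (∀ m x : M, m ∉ S → x * m ∉ S ∧ m * x ∉ S) ∧
      ∃ ρ : MonoidAlgebra K M →ₐ[K] MonoidAlgebra K ↥S,
        Function.Surjective ρ ∧
        (∀ (m : M) (h : m ∈ S),
          ρ (MonoidAlgebra.of K M m) = MonoidAlgebra.of K ↥S ⟨m, h⟩) ∧
        (∀ m : M, m ∉ S → ρ (MonoidAlgebra.of K M m) = 0) ∧
        (letI : Module (MonoidAlgebra K M) (MonoidAlgebra K ↥S) :=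
          Module.compHom (MonoidAlgebra K ↥S) ρ.toRingHom
         Module.Projective (MonoidAlgebra K M) (MonoidAlgebra K ↥S)) := by
  let S := jAboveSubmonoid hld he
  have hS : ∀ m n, m * n ∈ S → m ∈ S ∧ n ∈ S := fun _ _ => mem_jAbove_of_mul_mem
  refine ⟨S, rfl, fun m x hm => ⟨fun h => hm (hS x m h).2, fun h => hm (hS m x h).1⟩,
    restrict K hS, restrict_surjective hS, fun _ => restrict_of_of_mem hS,
    fun _ => restrict_of_of_notMem hS,
    projective_restrict hS hreg fun f hf => hf.mul_mul_self_of_leftDuo hld⟩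
end

section
/- Let M be a finite left regular band of groups with set of idempotents B. Then: (i) the map ψ : M → B sending each m ∈ M to its unique idempotent power m^ω is a surjective monoid homomorphism fixing B pointwise; (ii) if K is a field whose characteristic does not divide the order of the group of units of eMe for any idempotent e of M, then the monoid algebra KB, regarded as a KM-module via the K-algebra homomorphism KM → KB induced by ψ, is a projective KM-module. -/
/-!
Regularity and ℛ being a congruence give `a ℛ a²`, hence `m ℛ m^ω`; since ℛ-equivalent
idempotents of a left regular band coincide, `m ↦ m^ω` is multiplicative.

For (ii), let `ε_e` (`fiberMean`) be the averaging idempotent of the maximal subgroup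
`G_e = ψ⁻¹(e)`, which needs `|G_e|` invertible in `K`, and `η = ∏ᵢ (1 - eᵢ + ε_{eᵢ})` over the
idempotents, ordered so that each `eᵢ` has a largest right ideal among `eᵢ, …, eₙ`. Then
`m η = ψ(m) η` for all `m` and `ψ(η) = 1`, so `b ↦ b η` (for `b ∈ KB ⊆ KM`) is a `KM`-linear
splitting of `KM → KB`.
-/

/-- `x ↦ a * η` for any `a ∈ Φ⁻¹ x` is a well-defined `A`-linear section of `Φ`. -/
theorem Module.projective_of_surjective_of_ker_mul_eq_zero {A N : Type*} [Ring A] [Ring N]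
    (Φ : A →+* N) (hΦ : Function.Surjective Φ) (η : A) (hη : Φ η = 1)
    (hker : ∀ a, Φ a = 0 → a * η = 0) :
    letI := Module.compHom N Φ
    Module.Projective A N := by
  let _ : Module A N := Module.compHom N Φ
  have hmul : ∀ a b, Φ a = Φ b → a * η = b * η := fun a b hab =>
    sub_eq_zero.1 (by rw [← sub_mul]; exact hker _ (by rw [map_sub, hab, sub_self]))
  let ι := Function.surjInv hΦ
  have hι : ∀ x, Φ (ι x) = x := Function.surjInv_eq hΦ
  let s : N →ₗ[A] A :=
    { toFun := fun x => ι x * η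
      map_add' := fun x y => by
        rw [← add_mul]; exact hmul _ _ (by rw [map_add, hι, hι, hι])
      map_smul' := fun a x => by
        change ι (Φ a * x) * η = a * (ι x * η)
        rw [← mul_assoc]; exact hmul _ _ (by rw [map_mul, hι, hι]) }
  let p : A →ₗ[A] N :=
    { toFun := Φ
      map_add' := map_add Φ
      map_smul' := map_mul Φ }
  refine Module.Projective.of_split s p (LinearMap.ext fun x => ?_)
  change Φ (ι x * η) = x
  rw [map_mul, hι, hη, mul_one]

namespace LeftRegularBandOfGroups

variable {M : Type*} [Monoid M]

def rightIdeal (a : M) : Set M := {x | ∃ y, x = a * y}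

theorem mem_rightIdeal_self (a : M) : a ∈ rightIdeal a := ⟨1, (mul_one a).symm⟩

theorem rightIdeal_subset_iff {a b : M} : rightIdeal a ⊆ rightIdeal b ↔ a ∈ rightIdeal b := by
  refine ⟨fun h => h (mem_rightIdeal_self a), ?_⟩
  rintro ⟨u, rfl⟩ _ ⟨y, rfl⟩
  exact ⟨u * y, mul_assoc b u y⟩

theorem rightIdeal_mul_subset (a b : M) : rightIdeal (a * b) ⊆ rightIdeal a :=
  rightIdeal_subset_iff.2 ⟨b, rfl⟩

theorem rightIdeal_mul_left_mono (a : M) {x y : M} (h : rightIdeal x ⊆ rightIdeal y) :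
    rightIdeal (a * x) ⊆ rightIdeal (a * y) := by
  obtain ⟨u, rfl⟩ := rightIdeal_subset_iff.1 h
  rw [← mul_assoc]
  exact rightIdeal_mul_subset _ _

theorem rightIdeal_mul_left (a : M) {x y : M} (h : rightIdeal x = rightIdeal y) :
    rightIdeal (a * x) = rightIdeal (a * y) :=
  (rightIdeal_mul_left_mono a h.le).antisymm (rightIdeal_mul_left_mono a h.ge)

theorem mem_rightIdeal_iff {e : M} (he : IsIdempotentElem e) {x : M} :
    x ∈ rightIdeal e ↔ e * x = x := by
  refine ⟨?_, fun h => ⟨x, h.symm⟩⟩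
  rintro ⟨y, rfl⟩
  rw [← mul_assoc, he.eq]

section LeftDuo

variable (hld : ∀ m x : M, ∃ y, m * x = y * m)
include hld

theorem mul_mul_self_of_leftDuo {e : M} (he : IsIdempotentElem e) (f : M) :
    e * f * e = e * f := by
  obtain ⟨y, hy⟩ := hld e f
  rw [hy, mul_assoc, he.eq]

theorem isIdempotentElem_mul {e f : M} (he : IsIdempotentElem e)
    (hf : IsIdempotentElem f) : IsIdempotentElem (e * f) := by
  change e * f * (e * f) = e * f
  rw [← mul_assoc, mul_mul_self_of_leftDuo hld he, mul_assoc, hf.eq]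

theorem eq_of_rightIdeal_eq {e f : M} (he : IsIdempotentElem e) (hf : IsIdempotentElem f)
    (h : rightIdeal e = rightIdeal f) : e = f := by
  have hef : e * f = f := (mem_rightIdeal_iff he).1 (h ▸ mem_rightIdeal_self f)
  have hfe : f * e = e := (mem_rightIdeal_iff hf).1 (h ▸ mem_rightIdeal_self e)
  have := mul_mul_self_of_leftDuo hld he f
  rw [hef, hfe] at this
  exact this

/-- Any `h ∈ S` with a largest right ideal works. -/
theorem exists_mem_forall_mul_eq_imp_eq [Finite M] {S : Finset M} (hS : S.Nonempty)
    (hSi : ∀ e ∈ S, IsIdempotentElem e) : ∃ h ∈ S, ∀ e ∈ S, ∀ f, e * f = h → e = h := by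
  obtain ⟨h, hhS, hmax⟩ := S.exists_max_image (fun e => (rightIdeal e).ncard) hS
  refine ⟨h, hhS, fun e heS f hef => eq_of_rightIdeal_eq hld (hSi e heS) (hSi h hhS) ?_⟩
  have hsub : rightIdeal h ⊆ rightIdeal e := hef ▸ rightIdeal_mul_subset e f
  exact (Set.eq_of_subset_of_ncard_le hsub (hmax e heS)).symm

end LeftDuo

theorem rightIdeal_pow (hreg : ∀ a : M, ∃ x, a * x * a = a)
    (hR : ∀ a b c : M, rightIdeal a = rightIdeal b → rightIdeal (a * c) = rightIdeal (b * c))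
    (a : M) {n : ℕ} (hn : n ≠ 0) : rightIdeal (a ^ n) = rightIdeal a := by
  have hsq : rightIdeal (a * a) = rightIdeal a := by
    obtain ⟨x, hx⟩ := hreg a
    have : rightIdeal a = rightIdeal (a * x) :=
      (rightIdeal_mul_subset a x).antisymm' (rightIdeal_subset_iff.2 ⟨a, hx.symm⟩)
    simpa [hx] using hR _ _ a this
  induction n with
  | zero => exact absurd rfl hn
  | succ k ih =>
    rcases eq_or_ne k 0 with rfl | hk
    · rw [zero_add, pow_one]
    · rw [pow_succ, hR _ _ a (ih hk), hsq]

section IdempotentPower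

variable {w : M → M} (hw : ∀ m : M, ∃ n : ℕ, 1 ≤ n ∧ w m = m ^ n ∧ IsIdempotentElem (w m))
include hw

theorem isIdempotentElem_map (a : M) : IsIdempotentElem (w a) :=
  (hw a).choose_spec.2.2

theorem map_eq_self {e : M} (he : IsIdempotentElem e) : w e = e := by
  obtain ⟨n, hn, hwn, -⟩ := hw e
  rw [hwn, he.pow_eq (by omega)]

theorem map_mul_comm (a : M) : w a * a = a * w a := by
  obtain ⟨n, -, hwn, -⟩ := hw a
  rw [hwn, ← pow_succ, ← pow_succ']

variable (hreg : ∀ a : M, ∃ x, a * x * a = a)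
  (hR : ∀ a b c : M, rightIdeal a = rightIdeal b → rightIdeal (a * c) = rightIdeal (b * c))
include hreg hR

theorem rightIdeal_map (a : M) : rightIdeal (w a) = rightIdeal a := by
  obtain ⟨n, hn, hwn, -⟩ := hw a
  rw [hwn, rightIdeal_pow hreg hR a (by omega)]

theorem map_mul_self (a : M) : w a * a = a :=
  (mem_rightIdeal_iff (isIdempotentElem_map hw a)).1
    (rightIdeal_map hw hreg hR a ▸ mem_rightIdeal_self a)

theorem mul_map_self (a : M) : a * w a = a := by
  rw [← map_mul_comm hw, map_mul_self hw hreg hR]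

variable (hld : ∀ m x : M, ∃ y, m * x = y * m)
include hld

theorem map_eq_of_rightIdeal_eq {a b : M} (h : rightIdeal a = rightIdeal b) : w a = w b :=
  eq_of_rightIdeal_eq hld (isIdempotentElem_map hw a) (isIdempotentElem_map hw b) <| by
    rw [rightIdeal_map hw hreg hR, rightIdeal_map hw hreg hR, h]

theorem map_mul (a b : M) : w (a * b) = w a * w b := by
  refine eq_of_rightIdeal_eq hld (isIdempotentElem_map hw _)
    (isIdempotentElem_mul hld (isIdempotentElem_map hw a) (isIdempotentElem_map hw b)) ?_
  rw [rightIdeal_map hw hreg hR, rightIdeal_mul_left _ (rightIdeal_map hw hreg hR b),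
    hR _ _ b (rightIdeal_map hw hreg hR a)]

theorem exists_mul_eq_map (x : M) : ∃ x', w x' = w x ∧ x' * x = w x ∧ x * x' = w x := by
  obtain ⟨n, hn, hwn, hidem⟩ := hw x
  have hpow : x ^ (2 * n - 1 + 1) = w x := by
    rw [Nat.sub_add_cancel (by omega), two_mul, pow_add, ← hwn, hidem.eq]
  refine ⟨x ^ (2 * n - 1), map_eq_of_rightIdeal_eq hw hreg hR hld ?_, ?_, ?_⟩
  · exact rightIdeal_pow hreg hR x (by omega)
  · rw [← pow_succ, hpow]
  · rw [← pow_succ', hpow]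

theorem unit_of_corner_iff_map_eq {e : M} (he : IsIdempotentElem e) (x : M) :
    (e * x * e = x ∧ ∃ y, e * y * e = y ∧ x * y = e ∧ y * x = e) ↔ w x = e := by
  constructor
  · rintro ⟨hx, y, -, hxy, -⟩
    rw [← map_eq_self hw he]
    refine map_eq_of_rightIdeal_eq hw hreg hR hld (subset_antisymm ?_ ?_)
    · exact rightIdeal_subset_iff.2 ⟨x * e, by rw [← mul_assoc, hx]⟩
    · exact rightIdeal_subset_iff.2 ⟨y, hxy.symm⟩
  · rintro rfl
    obtain ⟨x', hwx', hx'x, hxx'⟩ := exists_mul_eq_map hw hreg hR hld x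
    refine ⟨by rw [map_mul_self hw hreg hR, mul_map_self hw hreg hR], x', ?_, hxx', hx'x⟩
    rw [← hwx', map_mul_self hw hreg hR, mul_map_self hw hreg hR]

end IdempotentPower

open Classical in
noncomputable def fiber {α β : Type*} [Fintype α] (w : α → β) (b : β) : Finset α :=
  Finset.univ.filter (w · = b)

theorem mem_fiber {α β : Type*} [Fintype α] {w : α → β} {b : β} {a : α} :
    a ∈ fiber w b ↔ w a = b := by
  simp [fiber]

section FiberAverage

variable [Fintype M] (K : Type*) [Field K] (w : M → M)

open MonoidAlgebra

noncomputable def fiberMean (e : M) : MonoidAlgebra K M :=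
  ((fiber w e).card : K)⁻¹ • ∑ g ∈ fiber w e, of K M g

noncomputable def fiberFactor (e : M) : MonoidAlgebra K M :=
  1 - of K M e + fiberMean K w e

theorem map_fiberFactor {A : Type*} [Ring A] [Algebra K A] (Φ : MonoidAlgebra K M →ₐ[K] A)
    (hΦ : ∀ m, Φ (of K M m) = Φ (of K M (w m))) {e : M}
    (hc : ((fiber w e).card : K) ≠ 0) : Φ (fiberFactor K w e) = 1 := by
  have hfib : ∀ g ∈ fiber w e, Φ (of K M g) = Φ (of K M e) := fun g hg => by
    rw [hΦ, mem_fiber.1 hg]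
  rw [fiberFactor, fiberMean, map_add, map_sub, map_one, map_smul, map_sum,
    Finset.sum_congr rfl hfib, Finset.sum_const, ← Nat.cast_smul_eq_nsmul K, smul_smul,
    inv_mul_cancel₀ hc, one_smul, sub_add_cancel]

end FiberAverage

section Splitting

variable [Fintype M] {w : M → M}
  (hw : ∀ m : M, ∃ n : ℕ, 1 ≤ n ∧ w m = m ^ n ∧ IsIdempotentElem (w m))
  (hreg : ∀ a : M, ∃ x, a * x * a = a)
  (hR : ∀ a b c : M, rightIdeal a = rightIdeal b → rightIdeal (a * c) = rightIdeal (b * c))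
  (hld : ∀ m x : M, ∃ y, m * x = y * m)
include hw hreg hR hld

theorem sum_fiber_mul_left {β : Type*} [AddCommMonoid β] (f : M → β) (x : M) :
    ∑ g ∈ fiber w (w x), f (x * g) = ∑ g ∈ fiber w (w x), f g := by
  obtain ⟨x', hwx', hx'x, hxx'⟩ := exists_mul_eq_map hw hreg hR hld x
  have hmem : ∀ y, w y = w x → ∀ g ∈ fiber w (w x), y * g ∈ fiber w (w x) := by
    intro y hy g hg
    rw [mem_fiber] at hg ⊢
    rw [map_mul hw hreg hR hld, hy, hg, (isIdempotentElem_map hw x).eq]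
  have hleft : ∀ g ∈ fiber w (w x), w x * g = g := fun g hg => by
    rw [← mem_fiber.1 hg, map_mul_self hw hreg hR]
  exact Finset.sum_nbij' (x * ·) (x' * ·) (hmem x rfl) (hmem x' hwx')
    (fun g hg => by rw [← mul_assoc, hx'x, hleft g hg])
    (fun g hg => by rw [← mul_assoc, hxx', hleft g hg]) (fun _ _ => rfl)

variable (K : Type*) [Field K]

open MonoidAlgebra

theorem of_mul_fiberFactor (x : M) : of K M x * fiberFactor K w (w x) = fiberMean K w (w x) := by
  rw [fiberFactor, fiberMean, mul_add, mul_sub, mul_one, ← _root_.map_mul, mul_map_self hw hreg hR,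
    sub_self, zero_add, mul_smul_comm, Finset.mul_sum]
  simp only [← _root_.map_mul]
  rw [sum_fiber_mul_left hw hreg hR hld (of K M)]

theorem of_mul_fiberFactor_mul {h : M} (hh : IsIdempotentElem h)
    (hc : ((fiber w h).card : K) ≠ 0) {η : MonoidAlgebra K M} (x : M)
    (hη : ∀ u, w u = w x * h → of K M u * η = of K M (w u) * η) :
    of K M x * (fiberFactor K w h * η) = of K M x * η := by
  -- `x (1 - h + ε_h) = x - x h + avg_g (x g)`, and `x h` and every `x g` lie over `w x * h`.
  have hxh : ∀ g ∈ fiber w h, of K M (x * g) * η = of K M (w x * h) * η := fun g hg => by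
    have hwxg : w (x * g) = w x * h := by rw [map_mul hw hreg hR hld, mem_fiber.1 hg]
    rw [hη _ hwxg, hwxg]
  have hwxh : w (x * h) = w x * h := by rw [map_mul hw hreg hR hld, map_eq_self hw hh]
  rw [← mul_assoc, fiberFactor, fiberMean, mul_add, mul_sub, mul_one, ← _root_.map_mul,
    mul_smul_comm, Finset.mul_sum, add_mul, sub_mul, smul_mul_assoc, Finset.sum_mul]
  simp only [← _root_.map_mul]
  rw [Finset.sum_congr rfl hxh, hη _ hwxh, hwxh, Finset.sum_const, ← Nat.cast_smul_eq_nsmul K,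
    smul_smul, inv_mul_cancel₀ hc, one_smul, sub_add_cancel]

theorem exists_mem_closure_forall_of_mul_eq
    (hc : ∀ e, IsIdempotentElem e → ((fiber w e).card : K) ≠ 0) (S : Finset M)
    (hSi : ∀ e ∈ S, IsIdempotentElem e) (hSmul : ∀ e ∈ S, ∀ f ∈ S, e * f ∈ S) :
    ∃ η ∈ Submonoid.closure (fiberFactor K w '' {e | IsIdempotentElem e}),
      ∀ x, w x ∈ S → of K M x * η = of K M (w x) * η := by
  classical
  induction S using Finset.strongInduction with | H S ih => ?_
  rcases S.eq_empty_or_nonempty with rfl | hS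
  · exact ⟨1, one_mem _, by simp⟩
  obtain ⟨h, hhS, hmax⟩ := exists_mem_forall_mul_eq_imp_eq hld hS hSi
  have hh := hSi h hhS
  have hmul_erase : ∀ e ∈ S.erase h, ∀ f ∈ S, e * f ∈ S.erase h := fun e he f hf =>
    have heS := Finset.mem_of_mem_erase he
    Finset.mem_erase.2 ⟨fun hef => Finset.ne_of_mem_erase he (hmax e heS f hef), hSmul e heS f hf⟩
  obtain ⟨η, hη, habs⟩ := ih (S.erase h) (Finset.erase_ssubset hhS)
    (fun e he => hSi e (Finset.mem_of_mem_erase he))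
    (fun e he f hf => hmul_erase e he f (Finset.mem_of_mem_erase hf))
  refine ⟨fiberFactor K w h * η,
    Submonoid.mul_mem _ (Submonoid.subset_closure ⟨h, hh, rfl⟩) hη, fun x hx => ?_⟩
  have hww : w (w x) = w x := map_eq_self hw (isIdempotentElem_map hw x)
  by_cases hxh : w x = h
  · have hmean : ∀ y, w y = h → of K M y * (fiberFactor K w h * η) = fiberMean K w h * η :=
      fun y hy => by rw [← mul_assoc, ← hy, of_mul_fiberFactor hw hreg hR hld K y]
    rw [hmean x hxh, hmean (w x) (hww.trans hxh)]
  · have hxS : w x ∈ S.erase h := Finset.mem_erase.2 ⟨hxh, hx⟩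
    have hfib : ∀ u, w u = w x * h → of K M u * η = of K M (w u) * η := fun u hu =>
      habs u (hu ▸ hmul_erase _ hxS h hhS)
    rw [of_mul_fiberFactor_mul hw hreg hR hld K hh (hc h hh) x hfib,
      of_mul_fiberFactor_mul hw hreg hR hld K hh (hc h hh) (w x) (by rwa [hww]), habs x hxS]

theorem projective_monoidAlgebra_of_idempotents
    (hc : ∀ e, IsIdempotentElem e → ((fiber w e).card : K) ≠ 0)
    (B : Submonoid M) (hB : (B : Set M) = {x | IsIdempotentElem x})
    (Φ : MonoidAlgebra K M →ₐ[K] MonoidAlgebra K B)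
    (hΦ : ∀ (m : M) (h : w m ∈ B), Φ (of K M m) = of K B ⟨w m, h⟩) :
    letI := Module.compHom (MonoidAlgebra K B) Φ.toRingHom
    Module.Projective (MonoidAlgebra K M) (MonoidAlgebra K B) := by
  classical
  have hBw : ∀ m, w m ∈ B := fun m => (Set.ext_iff.1 hB _).2 (isIdempotentElem_map hw m)
  have hΦw : ∀ m, Φ (of K M m) = Φ (of K M (w m)) := fun m => by
    rw [hΦ m (hBw m), hΦ (w m) (hBw _)]
    simp only [map_eq_self hw (isIdempotentElem_map hw m)]
  obtain ⟨η, hη, habs⟩ := exists_mem_closure_forall_of_mul_eq hw hreg hR hld K hc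
    (Finset.univ.filter IsIdempotentElem) (by simp)
    (by simpa using fun e he f hf => isIdempotentElem_mul hld he hf)
  have hΦη : Φ η = 1 := MonoidHom.mem_mker.1 <|
    Submonoid.closure_le (S := MonoidHom.mker (Φ : _ →* _)) |>.2
      (by rintro _ ⟨e, he, rfl⟩; exact map_fiberFactor K w Φ hΦw (hc e he)) hη
  let ι := mapDomainAlgHom K K B.subtype
  have hιof : ∀ b : B, ι (of K B b) = of K M b := fun b => by simp [ι]
  have hΦι : Φ.comp ι = AlgHom.id K _ := MonoidAlgebra.algHom_ext (fun b => by
    have hb : w b = b := map_eq_self hw ((Set.ext_iff.1 hB b).1 b.2)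
    change Φ (ι (of K B b)) = of K B b
    simp only [hιof, hΦ b (hBw b), hb]) (Subsingleton.elim _ _)
  have hιΦ : ∀ a, ι (Φ a) * η = a * η := by
    intro a
    induction a using MonoidAlgebra.induction_on with
    | of m => rw [hΦ m (hBw m), hιof, habs m (by simpa using isIdempotentElem_map hw m)]
    | add a b ha hb => rw [map_add, map_add, add_mul, add_mul, ha, hb]
    | smul r a ha => rw [map_smul, map_smul, smul_mul_assoc, smul_mul_assoc, ha]
  refine Module.projective_of_surjective_of_ker_mul_eq_zero Φ.toRingHom
    (fun x => ⟨ι x, AlgHom.congr_fun hΦι x⟩) η hΦη fun a ha => ?_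
  rw [← hιΦ, show Φ a = 0 from ha, map_zero, zero_mul]

end Splitting

end LeftRegularBandOfGroups

open LeftRegularBandOfGroups

/-- Let `M` be a finite left regular band of groups with set of idempotents
`B`.  Then: (i) the map `ψ : M → B`, `m ↦ m^ω` (the unique idempotent positive power of
`m`) is a surjective monoid homomorphism fixing `B` pointwise; (ii) if `K` is a field whose
characteristic divides the order of no maximal subgroup (unit group of `eMe`) of `M`, then
`KB`, regarded as a `KM`-module via the algebra map `KM → KB` induced by `ψ`, is a
projective `KM`-module. -/
theorem stmt_17 (M : Type) [Monoid M] [Fintype M] (K : Type) [Field K]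
    (hreg : ∀ a : M, ∃ x : M, a * x * a = a)
    (hld : ∀ m x : M, ∃ y : M, m * x = y * m)
    (hR : ∀ a b c : M,
      {x : M | ∃ y : M, x = a * y} = {x : M | ∃ y : M, x = b * y} →
      {x : M | ∃ y : M, x = a * c * y} = {x : M | ∃ y : M, x = b * c * y})
    (w : M → M)
    (hw : ∀ m : M, ∃ n : ℕ, 1 ≤ n ∧ w m = m ^ n ∧ IsIdempotentElem (w m)) :
    (∀ m m' : M, w (m * m') = w m * w m') ∧
      (w 1 = 1) ∧
      (∀ e : M, IsIdempotentElem e → w e = e) ∧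
      (Set.range w = {x : M | IsIdempotentElem x}) ∧
      ((∀ e : M, IsIdempotentElem e →
          (Nat.card {x : M // e * x * e = x ∧
            ∃ y : M, e * y * e = y ∧ x * y = e ∧ y * x = e} : K) ≠ 0) →
        ∀ B : Submonoid M, (B : Set M) = {x : M | IsIdempotentElem x} →
        ∀ Φ : MonoidAlgebra K M →ₐ[K] MonoidAlgebra K ↥B,
          (∀ (m : M) (h : w m ∈ B),
            Φ (MonoidAlgebra.of K M m) = MonoidAlgebra.of K ↥B ⟨w m, h⟩) →
          (letI : Module (MonoidAlgebra K M) (MonoidAlgebra K ↥B) :=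
            Module.compHom (MonoidAlgebra K ↥B) Φ.toRingHom
           Module.Projective (MonoidAlgebra K M) (MonoidAlgebra K ↥B))) := by
  refine ⟨map_mul hw hreg hR hld, ?_, fun e he => map_eq_self hw he, ?_, fun hchar => ?_⟩
  · obtain ⟨n, -, hw1, -⟩ := hw 1
    rw [hw1, one_pow]
  · ext x
    exact ⟨by rintro ⟨m, rfl⟩; exact isIdempotentElem_map hw m, fun hx => ⟨x, map_eq_self hw hx⟩⟩
  · refine projective_monoidAlgebra_of_idempotents hw hreg hR hld K fun e he => ?_
    classical
    have hcard : Nat.card {x : M // e * x * e = x ∧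
        ∃ y : M, e * y * e = y ∧ x * y = e ∧ y * x = e} = (fiber w e).card := by
      rw [Nat.card_eq_fintype_card, Fintype.card_subtype]
      congr 1
      ext g
      simp only [Finset.mem_filter, Finset.mem_univ, true_and, mem_fiber]
      exact unit_of_corner_iff_map_eq hw hreg hR hld he g
    exact hcard ▸ hchar e he
end
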